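/- arXiv:1404.1867 — 12 statements merged into one kernel-verified Lean document; each statement's English description precedes it below -/
import Mathlib

section
/- Let V be a finite-dimensional real or complex vector space with a (possibly degenerate) symmetric bilinear form ⟨·,·⟩, let ε ∈ {−1,1}, and let z_1,…,z_p be a skew-normal sequence of sign ε. Then z_1,…,z_p are linearly independent, and the restriction of ⟨·,·⟩ to the subspace H = span{z_1,…,z_p} is nondegenerate. -/
/-- Let `V` be a finite-dimensional vector space over `𝔽 = ℝ` or `ℂ`
with a (possibly degenerate) symmetric bilinear form `B`, let `ε ∈ {-1, 1}`, and let
`z 1, …, z p` be a skew-normal sequence of sign `ε` (i.e. `B (z i) (z j) = ε` when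
`i + j = p + 1` and `0` otherwise).  Then `z 1, …, z p` are linearly independent and the
restriction of `B` to `H = span {z 1, …, z p}` is nondegenerate. -/
theorem skew_normal_sequence_linearIndependent_and_nondegenerate
    {𝔽 : Type*} [RCLike 𝔽] {V : Type*} [AddCommGroup V] [Module 𝔽 V]
    [FiniteDimensional 𝔽 V]
    (B : V →ₗ[𝔽] V →ₗ[𝔽] 𝔽) (hsymm : ∀ x y, B x y = B y x)
    (p : ℕ) (ε : 𝔽) (hε : ε = 1 ∨ ε = -1)
    (z : ℕ → V)
    (hz : ∀ i j, 1 ≤ i → i ≤ p → 1 ≤ j → j ≤ p →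
      B (z i) (z j) = if i + j = p + 1 then ε else 0) :
    LinearIndependent 𝔽 (fun i : Fin p => z (i + 1)) ∧
      ∀ x ∈ Submodule.span 𝔽 (z '' Set.Icc 1 p),
        (∀ y ∈ Submodule.span 𝔽 (z '' Set.Icc 1 p), B x y = 0) → x = 0 := by
  have hε0 : ε ≠ 0 := by rcases hε with h | h <;> simp [h]
  set w : Fin p → V := fun i => z (i + 1) with hw
  have hB : ∀ i j : Fin p, B (w i) (w j) = if (i : ℕ) + j + 1 = p then ε else 0 := by
    intro i j
    have hi := i.isLt
    have hj := j.isLt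
    have := hz (i + 1) (j + 1) (by omega) (by omega) (by omega) (by omega)
    rw [hw]
    simp only []
    rw [this]
    congr 1
    simp only [eq_iff_iff]
    omega
  have key : ∀ (c : Fin p → 𝔽), (∀ j : Fin p, B (∑ i, c i • w i) (w j) = 0) →
      ∀ i, c i = 0 := by
    intro c h i
    have hi := i.isLt
    set j : Fin p := ⟨p - 1 - i, by omega⟩ with hj
    have hcj := h j
    simp only [map_sum, map_smul, LinearMap.sum_apply, LinearMap.smul_apply,
      smul_eq_mul, hB] at hcj
    rw [Finset.sum_eq_single i] at hcj
    · rw [if_pos (by show (i:ℕ) + (p - 1 - i) + 1 = p; omega)] at hcj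
      rcases mul_eq_zero.mp hcj with h' | h'
      · exact h'
      · exact absurd h' hε0
    · intro b _ hb
      rw [if_neg ?_, mul_zero]
      have hjv : (j : ℕ) = p - 1 - i := rfl
      intro hcontra; apply hb; ext; omega
    · intro h'; exact absurd (Finset.mem_univ i) h'
  have hli : LinearIndependent 𝔽 w := by
    rw [Fintype.linearIndependent_iff]
    intro g hg
    apply key g
    intro j
    rw [hg, map_zero, LinearMap.zero_apply]
  refine ⟨hli, ?_⟩
  have hspan : z '' Set.Icc 1 p = Set.range w := by
    ext v
    constructor
    · rintro ⟨n, ⟨h1, h2⟩, rfl⟩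
      exact ⟨⟨n - 1, by omega⟩, by show z (n - 1 + 1) = z n; congr 1; omega⟩
    · rintro ⟨i, rfl⟩
      exact ⟨i + 1, ⟨by omega, by have := i.isLt; omega⟩, rfl⟩
  rw [hspan]
  intro x hx hbx
  obtain ⟨c, hc⟩ := (Submodule.mem_span_range_iff_exists_fun 𝔽).mp hx
  rw [← hc]
  have hc0 : ∀ i, c i = 0 := by
    apply key
    intro j
    rw [hc]
    exact hbx (w j) (Submodule.subset_span ⟨j, rfl⟩)
  simp [hc0]
end

section
/- Let V be a finite-dimensional real vector space with a symmetric bilinear form ⟨·,·⟩, let ε ∈ {−1,1}, and let z_1,…,z_p be a skew-normal sequence of sign ε spanning the subspace H. Then H admits an orthogonal basis w_1,…,w_p (⟨w_i,w_j⟩ = 0 for i ≠ j, each ⟨w_i,w_i⟩ = ±1) in which the number of vectors with ⟨w_i,w_i⟩ = −1 equals ⌊(p+1)/2⌋ if ε = −1, and equals p − ⌊(p+1)/2⌋ if ε = 1; in particular the index of H is ⌊(p+1)/2⌋ when ε = −1 and p − ⌊(p+1)/2⌋ when ε = 1. -/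
lemma aux_card_filter_lt (p m : ℕ) :
    (Finset.univ.filter fun i : Fin p => i.val < m).card = min m p := by
  classical
  rw [Finset.card_filter, Fin.sum_univ_eq_sum_range (fun k => if k < m then 1 else 0) p,
    ← Finset.card_filter]
  have : (Finset.range p).filter (fun k => k < m) = Finset.range (min m p) := by
    ext x; simp [Nat.lt_min, and_comm]
  rw [this, Finset.card_range]



/-- Let `V` be a finite-dimensional real vector space with a symmetric
bilinear form `B`, `ε ∈ {-1, 1}`, and let `z 1, …, z p` be a skew-normal sequence of
sign `ε` spanning the subspace `H`.  Then `H` admits an orthogonal basis `w 0, …, w (p-1)`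
with `B (w i) (w i) = ±1`, in which the number of vectors with `B (w i) (w i) = -1`
equals `⌊(p+1)/2⌋` if `ε = -1` and `p - ⌊(p+1)/2⌋` if `ε = 1`; in particular this number
is the index of `H`. -/
theorem skew_normal_sequence_index
    {V : Type*} [AddCommGroup V] [Module ℝ V] [FiniteDimensional ℝ V]
    (B : V →ₗ[ℝ] V →ₗ[ℝ] ℝ) (hsymm : ∀ x y, B x y = B y x)
    (p : ℕ) (ε : ℝ) (hε : ε = 1 ∨ ε = -1)
    (z : ℕ → V)
    (hz : ∀ i j, 1 ≤ i → i ≤ p → 1 ≤ j → j ≤ p →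
      B (z i) (z j) = if i + j = p + 1 then ε else 0)
    (H : Submodule ℝ V) (hH : H = Submodule.span ℝ (z '' Set.Icc 1 p)) :
    ∃ w : Fin p → V,
      Submodule.span ℝ (Set.range w) = H ∧
      LinearIndependent ℝ w ∧
      (∀ i j, i ≠ j → B (w i) (w j) = 0) ∧
      (∀ i, B (w i) (w i) = 1 ∨ B (w i) (w i) = -1) ∧
      (Finset.univ.filter fun i => B (w i) (w i) = -1).card =
        (if ε = -1 then (p + 1) / 2 else p - (p + 1) / 2) := by
  classical
  set c : ℝ := (Real.sqrt 2)⁻¹ with hcdef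
  have hc2 : c * c = 1/2 := by
    rw [hcdef, ← mul_inv, Real.mul_self_sqrt (by norm_num)]
    norm_num
  set w : Fin p → V := fun i =>
    if 2*(i.val+1) < p+1 then c • (z (i.val+1) + z (p - i.val))
    else if 2*(i.val+1) = p+1 then z (i.val+1)
    else c • (z (i.val+1) - z (p - i.val)) with hw
  -- orthogonality
  have key : ∀ i j : Fin p, i.val < j.val → B (w i) (w j) = 0 := by
    intro i j hij
    have hi := i.isLt; have hj := j.isLt
    by_cases hpart : i.val + j.val + 1 = p
    · have hpi : p - i.val = j.val + 1 := by omega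
      have hpj : p - j.val = i.val + 1 := by omega
      have h2i : 2*(i.val+1) < p+1 := by omega
      have h2j : ¬ 2*(j.val+1) < p+1 := by omega
      have h2j' : ¬ 2*(j.val+1) = p+1 := by omega
      have eaa : B (z (i.val+1)) (z (i.val+1)) = 0 := by
        rw [hz _ _ (by omega) (by omega) (by omega) (by omega), if_neg (by omega)]
      have ebb : B (z (j.val+1)) (z (j.val+1)) = 0 := by
        rw [hz _ _ (by omega) (by omega) (by omega) (by omega), if_neg (by omega)]
      have eab : B (z (i.val+1)) (z (j.val+1)) = ε := by
        rw [hz _ _ (by omega) (by omega) (by omega) (by omega), if_pos (by omega)]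
      have eba : B (z (j.val+1)) (z (i.val+1)) = ε := by
        rw [hz _ _ (by omega) (by omega) (by omega) (by omega), if_pos (by omega)]
      simp only [hw, hpi, hpj, if_pos h2i, if_neg h2j, if_neg h2j']
      simp only [map_smul, map_add, map_sub, LinearMap.smul_apply, LinearMap.add_apply,
        LinearMap.sub_apply, smul_eq_mul, eaa, ebb, eab, eba]
      ring
    · have e1 : B (z (i.val+1)) (z (j.val+1)) = 0 := by
        rw [hz _ _ (by omega) (by omega) (by omega) (by omega), if_neg (by omega)]
      have e2 : B (z (i.val+1)) (z (p - j.val)) = 0 := by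
        rw [hz _ _ (by omega) (by omega) (by omega) (by omega), if_neg (by omega)]
      have e3 : B (z (p - i.val)) (z (j.val+1)) = 0 := by
        rw [hz _ _ (by omega) (by omega) (by omega) (by omega), if_neg (by omega)]
      have e4 : B (z (p - i.val)) (z (p - j.val)) = 0 := by
        rw [hz _ _ (by omega) (by omega) (by omega) (by omega), if_neg (by omega)]
      simp only [hw]
      split_ifs <;>
        simp [map_smul, map_add, map_sub, LinearMap.smul_apply, LinearMap.add_apply,
          LinearMap.sub_apply, e1, e2, e3, e4]
  have horth : ∀ i j : Fin p, i ≠ j → B (w i) (w j) = 0 := by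
    intro i j hij
    rcases Nat.lt_trichotomy i.val j.val with h | h | h
    · exact key i j h
    · exact absurd (Fin.ext h) hij
    · rw [hsymm]; exact key j i h
  -- diagonal values
  have hdiag : ∀ i : Fin p, B (w i) (w i) = if 2*(i.val+1) ≤ p+1 then ε else -ε := by
    intro i
    have hi := i.isLt
    by_cases h1 : 2*(i.val+1) < p+1
    · have eaa : B (z (i.val+1)) (z (i.val+1)) = 0 := by
        rw [hz _ _ (by omega) (by omega) (by omega) (by omega), if_neg (by omega)]
      have ebb : B (z (p - i.val)) (z (p - i.val)) = 0 := by
        rw [hz _ _ (by omega) (by omega) (by omega) (by omega), if_neg (by omega)]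
      have eab : B (z (i.val+1)) (z (p - i.val)) = ε := by
        rw [hz _ _ (by omega) (by omega) (by omega) (by omega), if_pos (by omega)]
      have eba : B (z (p - i.val)) (z (i.val+1)) = ε := by
        rw [hz _ _ (by omega) (by omega) (by omega) (by omega), if_pos (by omega)]
      rw [if_pos (by omega)]
      simp only [hw, if_pos h1]
      simp only [map_smul, map_add, LinearMap.smul_apply, LinearMap.add_apply,
        smul_eq_mul, eaa, ebb, eab, eba]
      have : c * (c * (0 + ε) + c * (ε + 0)) = (c * c) * (2 * ε) := by ring
      rw [this, hc2]; ring
    · by_cases h2 : 2*(i.val+1) = p+1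
      · rw [if_pos (by omega)]
        simp only [hw, if_neg h1, if_pos h2]
        rw [hz _ _ (by omega) (by omega) (by omega) (by omega), if_pos (by omega)]
      · have eaa : B (z (i.val+1)) (z (i.val+1)) = 0 := by
          rw [hz _ _ (by omega) (by omega) (by omega) (by omega), if_neg (by omega)]
        have ebb : B (z (p - i.val)) (z (p - i.val)) = 0 := by
          rw [hz _ _ (by omega) (by omega) (by omega) (by omega), if_neg (by omega)]
        have eab : B (z (i.val+1)) (z (p - i.val)) = ε := by
          rw [hz _ _ (by omega) (by omega) (by omega) (by omega), if_pos (by omega)]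
        have eba : B (z (p - i.val)) (z (i.val+1)) = ε := by
          rw [hz _ _ (by omega) (by omega) (by omega) (by omega), if_pos (by omega)]
        rw [if_neg (by omega)]
        simp only [hw, if_neg h1, if_neg h2]
        simp only [map_smul, map_sub, LinearMap.smul_apply, LinearMap.sub_apply,
          smul_eq_mul, eaa, ebb, eab, eba]
        have : c * (c * (0 - ε) - c * (ε - 0)) = (c * c) * (-2 * ε) := by ring
        rw [this, hc2]; ring
  have hεne : (ε : ℝ) ≠ 0 := by rcases hε with h | h <;> rw [h] <;> norm_num
  have hpm : ∀ i : Fin p, B (w i) (w i) = 1 ∨ B (w i) (w i) = -1 := by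
    intro i
    rw [hdiag i]
    rcases hε with h | h <;> rw [h] <;> split_ifs <;> norm_num
  -- linear independence
  have hlin : LinearIndependent ℝ w := by
    apply LinearMap.BilinForm.linearIndependent_of_iIsOrtho (B := B)
    · exact fun i j hij => horth i j hij
    · intro i
      rw [hdiag i]
      split_ifs <;> simpa using hεne
  -- span
  have hwmem : ∀ i : Fin p, w i ∈ H := by
    intro i
    have hi := i.isLt
    have m1 : z (i.val+1) ∈ H := by
      rw [hH]; exact Submodule.subset_span ⟨i.val+1, ⟨by omega, by omega⟩, rfl⟩
    have m2 : z (p - i.val) ∈ H := by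
      rw [hH]; exact Submodule.subset_span ⟨p - i.val, ⟨by omega, by omega⟩, rfl⟩
    simp only [hw]
    split_ifs
    · exact Submodule.smul_mem _ _ (Submodule.add_mem _ m1 m2)
    · exact m1
    · exact Submodule.smul_mem _ _ (Submodule.sub_mem _ m1 m2)
  have hle : Submodule.span ℝ (Set.range w) ≤ H :=
    Submodule.span_le.2 (Set.range_subset_iff.2 hwmem)
  have himg : z '' Set.Icc 1 p = Set.range (fun i : Fin p => z (i.val + 1)) := by
    ext x
    constructor
    · rintro ⟨k, ⟨hk1, hk2⟩, rfl⟩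
      exact ⟨⟨k - 1, by omega⟩, by simp; congr 1; omega⟩
    · rintro ⟨i, rfl⟩
      exact ⟨i.val + 1, ⟨by omega, by have := i.isLt; omega⟩, rfl⟩
  have hrk1 : Module.finrank ℝ (Submodule.span ℝ (Set.range w)) = p := by
    rw [finrank_span_eq_card hlin, Fintype.card_fin]
  have hrk2 : Module.finrank ℝ H ≤ p := by
    rw [hH, himg]
    simpa [Set.finrank] using finrank_range_le_card (fun i : Fin p => z (i.val + 1))
  have hspan : Submodule.span ℝ (Set.range w) = H :=
    Submodule.eq_of_le_of_finrank_le hle (by rw [hrk1]; exact hrk2)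
  -- counting
  refine ⟨w, hspan, hlin, horth, hpm, ?_⟩
  set m := (p+1)/2 with hm
  rcases hε with h | h
  · rw [if_neg (by rw [h]; norm_num)]
    have hset : (Finset.univ.filter fun i : Fin p => B (w i) (w i) = -1) =
        (Finset.univ.filter fun i : Fin p => ¬ i.val < m) := by
      apply Finset.filter_congr
      intro i _
      rw [hdiag i, h]
      by_cases hle2 : 2*(i.val+1) ≤ p+1
      · rw [if_pos hle2]; constructor
        · intro habs; norm_num at habs
        · intro habs; exact absurd (by omega : i.val < m) habs
      · rw [if_neg hle2]; constructor
        · intro _; omega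
        · intro _; norm_num
    rw [hset, Finset.filter_not, Finset.card_sdiff_of_subset (Finset.filter_subset _ _),
      aux_card_filter_lt, Finset.card_univ, Fintype.card_fin]
    omega
  · rw [if_pos h]
    have hset : (Finset.univ.filter fun i : Fin p => B (w i) (w i) = -1) =
        (Finset.univ.filter fun i : Fin p => i.val < m) := by
      apply Finset.filter_congr
      intro i _
      rw [hdiag i, h]
      by_cases hle2 : 2*(i.val+1) ≤ p+1
      · rw [if_pos hle2]; constructor
        · intro _; omega
        · intro _; rfl
      · rw [if_neg hle2]; constructor
        · intro habs; norm_num at habs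
        · intro habs; exact absurd habs (by omega)
    rw [hset, aux_card_filter_lt]
    omega
end

section
/- Let V be a complex scalar product space and T a self-adjoint linear operator on V. If λ and μ are distinct eigenvalues of T, then the generalized eigenspaces K_λ and K_μ are orthogonal: ⟨x,y⟩ = 0 for all x ∈ K_λ and y ∈ K_μ. -/
/-- Let `V` be a complex scalar product space (finite-dimensional,
with nondegenerate symmetric complex-bilinear form `B`) and `T` a self-adjoint operator
on `V`.  If `lam ≠ mu` are distinct eigenvalues of `T`, then the generalized eigenspaces
`K_lam` and `K_mu` are orthogonal. -/
theorem generalized_eigenspaces_orthogonal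
    {V : Type*} [AddCommGroup V] [Module ℂ V] [FiniteDimensional ℂ V]
    (B : V →ₗ[ℂ] V →ₗ[ℂ] ℂ) (hsymm : ∀ x y, B x y = B y x)
    (hnondeg : ∀ x, (∀ y, B x y = 0) → x = 0)
    (T : Module.End ℂ V) (hT : ∀ x y, B (T x) y = B x (T y))
    (lam mu : ℂ) (hne : lam ≠ mu)
    (hlam : ∃ v, v ≠ 0 ∧ T v = lam • v) (hmu : ∃ v, v ≠ 0 ∧ T v = mu • v) :
    ∀ x y, (∃ p : ℕ, 1 ≤ p ∧ ((T - lam • 1) ^ p) x = 0) →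
      (∃ q : ℕ, 1 ≤ q ∧ ((T - mu • 1) ^ q) y = 0) → B x y = 0 := by
  have key : ∀ n p q : ℕ, p + q ≤ n → ∀ x y, ((T - lam • 1) ^ p) x = 0 →
      ((T - mu • 1) ^ q) y = 0 → B x y = 0 := by
    intro n
    induction n with
    | zero =>
      intro p q h x y hx hy
      have hp : p = 0 := by omega
      subst hp
      simp only [pow_zero, Module.End.one_apply] at hx
      subst hx; simp
    | succ n ih =>
      intro p q h x y hx hy
      match p, q with
      | 0, _ =>
        simp only [pow_zero, Module.End.one_apply] at hx
        subst hx; simp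
      | _, 0 =>
        simp only [pow_zero, Module.End.one_apply] at hy
        subst hy; simp
      | p' + 1, q' + 1 =>
        have hu : ((T - lam • 1) ^ p') ((T - lam • 1) x) = 0 := by
          rw [pow_succ, Module.End.mul_apply] at hx; exact hx
        have hv : ((T - mu • 1) ^ q') ((T - mu • 1) y) = 0 := by
          rw [pow_succ, Module.End.mul_apply] at hy; exact hy
        have h1 : B ((T - lam • 1) x) y = 0 := ih p' (q' + 1) (by omega) _ _ hu hy
        have h2 : B x ((T - mu • 1) y) = 0 := ih (p' + 1) q' (by omega) _ _ hx hv
        have hrel : B ((T - lam • 1) x) y = B x ((T - mu • 1) y) + (mu - lam) * B x y := by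
          simp only [LinearMap.sub_apply, LinearMap.smul_apply, Module.End.one_apply,
            map_sub, map_smul, LinearMap.sub_apply, LinearMap.smul_apply, smul_eq_mul, hT x y]
          ring
        rw [h1, h2, zero_add] at hrel
        have : mu - lam ≠ 0 := sub_ne_zero.mpr (Ne.symm hne)
        exact (mul_eq_zero.mp hrel.symm).resolve_left this
  intro x y ⟨p, _, hx⟩ ⟨q, _, hy⟩
  exact key (p + q) p q le_rfl x y hx hy
end

section
/- Let V be a complex scalar product space and T a self-adjoint linear operator on V with spectrum λ_1,…,λ_k (the distinct eigenvalues of T). Then each generalized eigenspace K_{λ_i} is a nondegenerate subspace, and V is the orthogonal direct sum V = K_{λ_1} ⊥ ⋯ ⊥ K_{λ_k}. -/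
open Module

/-- Orthogonality of generalized eigenvectors for distinct eigenvalues. -/
lemma orth_aux {V : Type*} [AddCommGroup V] [Module ℂ V]
    (B : V →ₗ[ℂ] V →ₗ[ℂ] ℂ)
    (T : Module.End ℂ V) (hT : ∀ x y, B (T x) y = B x (T y))
    (μ ν : ℂ) (hμν : μ ≠ ν) :
    ∀ m n : ℕ, ∀ x y : V, ((T - μ • 1) ^ m) x = 0 → ((T - ν • 1) ^ n) y = 0 →
      B x y = 0 := by
  intro m
  induction m with
  | zero => intro n x y hx hy; simp at hx; simp [hx]
  | succ m ihm =>
    intro n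
    induction n with
    | zero => intro x y hx hy; simp at hy; simp [hy]
    | succ n ihn =>
      intro x y hx hy
      have hx' : ((T - μ • 1) ^ m) ((T - μ • 1) x) = 0 := by
        rw [← Module.End.mul_apply, ← pow_succ]
        exact hx
      have hy' : ((T - ν • 1) ^ n) ((T - ν • 1) y) = 0 := by
        rw [← Module.End.mul_apply, ← pow_succ]
        exact hy
      have h1 : B ((T - μ • 1) x) y = 0 := ihm (n + 1) _ _ hx' hy
      have h2 : B x ((T - ν • 1) y) = 0 := ihn x _ hx hy'
      have e1 : B ((T - μ • 1) x) y = B x (T y) - μ * B x y := by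
        simp [hT x y, mul_comm]
      have e2 : B x ((T - ν • 1) y) = B x (T y) - ν * B x y := by
        simp [mul_comm]
      have : (ν - μ) * B x y = 0 := by
        rw [e1] at h1; rw [e2] at h2
        ring_nf
        linear_combination h1 - h2
      rcases mul_eq_zero.mp this with h | h
      · exact absurd (sub_eq_zero.mp h).symm hμν
      · exact h

/-- Let `V` be a complex scalar product space and `T` a self-adjoint
operator on `V`.  Then every generalized eigenspace `K_μ` of `T` is nondegenerate, the
generalized eigenspaces of distinct eigenvalues are mutually orthogonal, and `V` is
the (orthogonal) direct sum of the generalized eigenspaces of the spectrum of `T`. -/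
theorem generalized_eigenspace_decomposition_orthogonal
    {V : Type*} [AddCommGroup V] [Module ℂ V] [FiniteDimensional ℂ V]
    (B : V →ₗ[ℂ] V →ₗ[ℂ] ℂ) (hsymm : ∀ x y, B x y = B y x)
    (hnondeg : ∀ x, (∀ y, B x y = 0) → x = 0)
    (T : Module.End ℂ V) (hT : ∀ x y, B (T x) y = B x (T y)) :
    (∀ μ : ℂ, ∀ x ∈ T.maxGenEigenspace μ,
        (∀ y ∈ T.maxGenEigenspace μ, B x y = 0) → x = 0) ∧
    (∀ μ ν : ℂ, μ ≠ ν →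
        ∀ x ∈ T.maxGenEigenspace μ, ∀ y ∈ T.maxGenEigenspace ν, B x y = 0) ∧
    iSupIndep T.maxGenEigenspace ∧
    (⨆ μ : ℂ, T.maxGenEigenspace μ) = ⊤ := by
  have horth : ∀ μ ν : ℂ, μ ≠ ν →
      ∀ x ∈ T.maxGenEigenspace μ, ∀ y ∈ T.maxGenEigenspace ν, B x y = 0 := by
    intro μ ν hμν x hx y hy
    rw [Module.End.mem_maxGenEigenspace] at hx hy
    obtain ⟨m, hm⟩ := hx
    obtain ⟨n, hn⟩ := hy
    exact orth_aux B T hT μ ν hμν m n x y hm hn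
  have htop : (⨆ μ : ℂ, T.maxGenEigenspace μ) = ⊤ :=
    Module.End.iSup_maxGenEigenspace_eq_top T
  refine ⟨?_, horth, Module.End.independent_maxGenEigenspace T, htop⟩
  intro μ x hx hxy
  apply hnondeg
  intro y
  have hy : y ∈ (⨆ ν : ℂ, T.maxGenEigenspace ν) := htop ▸ Submodule.mem_top
  refine Submodule.iSup_induction (motive := fun y => B x y = 0) _ hy ?_ (by simp) ?_
  · intro ν z hz
    by_cases h : μ = ν
    · exact hxy z (h ▸ hz)
    · exact horth μ ν h x hx z hz
  · intro a b ha hb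
    simp [ha, hb]
end

section
/- Let V be a scalar product space (over ℝ or ℂ), T a self-adjoint linear operator on V, λ an eigenvalue of T, and U = (T−λI) restricted to the generalized eigenspace K_λ. If k ≥ 0 is such that U^k ≠ 0, then there exists x ∈ K_λ with ⟨U^k x, x⟩ ≠ 0. -/
/-- Let `V` be a scalar product space over `𝔽 = ℝ` or `ℂ`, `T` a
self-adjoint operator on `V`, `lam` an eigenvalue of `T` and `U = T - lam • 1` restricted
to the generalized eigenspace `K_lam`.  If `k ≥ 0` is such that `U ^ k ≠ 0` on `K_lam`,
then there is `x ∈ K_lam` with `B (U^k x) x ≠ 0`. -/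
theorem exists_nonzero_scalar_product_generalized_eigenvector
    {𝔽 : Type*} [RCLike 𝔽] {V : Type*} [AddCommGroup V] [Module 𝔽 V]
    [FiniteDimensional 𝔽 V]
    (B : V →ₗ[𝔽] V →ₗ[𝔽] 𝔽) (hsymm : ∀ x y, B x y = B y x)
    (hnondeg : ∀ x, (∀ y, B x y = 0) → x = 0)
    (T : Module.End 𝔽 V) (hT : ∀ x y, B (T x) y = B x (T y))
    (lam : 𝔽) (hlam : ∃ v, v ≠ 0 ∧ T v = lam • v)
    (k : ℕ)
    (hk : ∃ x ∈ T.maxGenEigenspace lam, ((T - lam • 1) ^ k) x ≠ 0) :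
    ∃ x ∈ T.maxGenEigenspace lam, B (((T - lam • 1) ^ k) x) x ≠ 0 := by
  classical
  obtain ⟨x0, hx0, hx0k⟩ := hk
  set U : Module.End 𝔽 V := T - lam • 1 with hU
  -- U is self-adjoint w.r.t. B
  have hUadj : ∀ x y, B (U x) y = B x (U y) := by
    intro x y
    have : B (T x) y - lam * B x y = B x (T y) - lam * B x y := by rw [hT x y]
    simpa [hU, LinearMap.sub_apply, LinearMap.smul_apply, map_sub, map_smul,
      smul_eq_mul, sub_eq_sub_iff_sub_eq_sub] using this
  have hUpow : ∀ (m : ℕ) (x y : V), B ((U ^ m) x) y = B x ((U ^ m) y) := by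
    intro m
    induction m with
    | zero => simp
    | succ m ih =>
      intro x y
      calc B ((U ^ (m + 1)) x) y = B ((U ^ m) (U x)) y := by
            rw [pow_succ, Module.End.mul_apply]
        _ = B (U x) ((U ^ m) y) := ih (U x) y
        _ = B x (U ((U ^ m) y)) := hUadj x _
        _ = B x ((U ^ (m + 1)) y) := by rw [pow_succ', Module.End.mul_apply]
  by_contra hcon
  push_neg at hcon
  -- The symmetric form x, y ↦ B (U^k x) y vanishes on K × K
  have hC : ∀ x ∈ T.maxGenEigenspace lam, ∀ y ∈ T.maxGenEigenspace lam,
      B ((U ^ k) x) y = 0 := by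
    intro x hx y hy
    have hxy := hcon (x + y) (Submodule.add_mem _ hx hy)
    have hx' := hcon x hx
    have hy' := hcon y hy
    have hsym2 : B ((U ^ k) y) x = B ((U ^ k) x) y := by
      rw [hsymm ((U ^ k) y) x, hUpow k x y]
    have hexp : B ((U ^ k) x) x + B ((U ^ k) y) x + (B ((U ^ k) x) y + B ((U ^ k) y) y)
        = 0 := by
      simpa [map_add, LinearMap.add_apply] using hxy
    have h2 : (2 : 𝔽) * B ((U ^ k) x) y = 0 := by
      linear_combination hexp - hx' - hy' - hsym2
    exact (mul_eq_zero.mp h2).resolve_left two_ne_zero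
  -- Pick n large enough for the Fitting decomposition and for K = ker (U^n)
  obtain ⟨N, hN⟩ := Filter.eventually_atTop.mp (LinearMap.eventually_isCompl_ker_pow_range_pow U)
  set n : ℕ := max N (Module.finrank 𝔽 V) with hn
  have hcompl : IsCompl (LinearMap.ker (U ^ n)) (LinearMap.range (U ^ n)) :=
    hN n (le_max_left _ _)
  have hker : LinearMap.ker (U ^ n) = T.maxGenEigenspace lam := by
    rw [Module.End.maxGenEigenspace_eq_genEigenspace_finrank, Module.End.genEigenspace_nat,
      ← hU, Module.End.ker_pow_eq_ker_pow_finrank_of_le (le_max_right N (Module.finrank 𝔽 V))]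
  -- z := U^k x0 is B-orthogonal to all of V, hence zero: contradiction
  have hz : ((U ^ k) x0) = 0 := by
    apply hnondeg
    intro y
    have hy : y ∈ LinearMap.ker (U ^ n) ⊔ LinearMap.range (U ^ n) := by
      rw [hcompl.sup_eq_top]; trivial
    obtain ⟨a, ha, b, hb, rfl⟩ := Submodule.mem_sup.mp hy
    obtain ⟨u, rfl⟩ := hb
    have h1 : B ((U ^ k) x0) a = 0 := hC x0 hx0 a (hker ▸ ha)
    have h2 : B ((U ^ k) x0) ((U ^ n) u) = 0 := by
      have hx0n : (U ^ n) x0 = 0 := by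
        have := hker ▸ hx0
        exact LinearMap.mem_ker.mp this
      have : B ((U ^ n) ((U ^ k) x0)) u = 0 := by
        have hcomm : (U ^ n) ((U ^ k) x0) = (U ^ k) ((U ^ n) x0) := by
          rw [← Module.End.mul_apply, ← Module.End.mul_apply, ← pow_add, ← pow_add,
            Nat.add_comm]
        rw [hcomm, hx0n, map_zero, LinearMap.map_zero₂]
      rw [← hUpow n ((U ^ k) x0) u] at *
      simpa using this
    rw [map_add, h1, h2, add_zero]
  exact hx0k hz
end

section
/- Let V be a scalar product space over 𝔽 (𝔽 = ℝ or ℂ), T a self-adjoint linear operator on V, λ ∈ 𝔽 an eigenvalue of T, and x a vector with (T−λI)^p x = 0 and (T−λI)^{p−1} x ≠ 0. Set U = T−λI, v_i = U^{p−i} x, and let H = span{v_1,…,v_p}. If ⟨v_1,v_p⟩ ≠ 0, then there exists x' ∈ H with U^{p−1}x' ≠ 0 such that the vectors v'_i = U^{p−i} x' span H and form a skew-normal sequence, whose sign is sgn⟨v_1,v_p⟩ when 𝔽 = ℝ, and which can be taken of sign 1 when 𝔽 = ℂ. -/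
open RCLike in
lemma my_eps {𝔽 : Type*} [RCLike 𝔽] (c : 𝔽) (hc : c ≠ 0) :
    ∃ ε w : 𝔽, (ε = 1 ∨ ε = -1) ∧ w ≠ 0 ∧ w ^ 2 * c = ε ∧
      ∀ r : ℝ, c = algebraMap ℝ 𝔽 r → ε = algebraMap ℝ 𝔽 (Real.sign r) := by
  by_cases him : im c = 0
  · set r : ℝ := re c with hr
    have hcr : c = algebraMap ℝ 𝔽 r := by
      rw [algebraMap_eq_ofReal]
      conv_lhs => rw [← re_add_im c]
      simp [him, ← hr]
    have hr0 : r ≠ 0 := by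
      intro h; apply hc; rw [hcr, h]; simp
    refine ⟨algebraMap ℝ 𝔽 (Real.sign r), algebraMap ℝ 𝔽 (Real.sqrt (1/|r|)), ?_, ?_, ?_, ?_⟩
    · rcases Real.sign_apply_eq_of_ne_zero r hr0 with h | h
      · right; rw [h]; simp
      · left; rw [h]; simp
    · simp only [ne_eq, map_eq_zero]
      positivity
    · rw [hcr, ← map_pow, ← map_mul]
      congr 1
      rw [Real.sq_sqrt (by positivity)]
      rcases lt_or_gt_of_ne hr0 with h | h
      · rw [abs_of_neg h, Real.sign_of_neg h]; field_simp
      · rw [abs_of_pos h, Real.sign_of_pos h]; field_simp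
    · intro r' hr'
      have : r' = r := (algebraMap ℝ 𝔽).injective (hr'.symm.trans hcr)
      rw [this]
  · have hI : (I : 𝔽) * I = -1 := by
      apply I_mul_I_of_nonzero
      intro h
      apply him
      conv_lhs => rw [← re_add_im c]
      rw [h]
      simp
    set z : 𝔽 := c⁻¹ with hz
    have hb : im z ≠ 0 := by
      rw [hz, inv_im]
      simp only [ne_eq, div_eq_zero_iff, neg_eq_zero, not_or]
      exact ⟨him, by simpa [map_eq_zero] using hc⟩
    set a : ℝ := re z with ha
    set b : ℝ := im z with hbdef
    have hza : |a| ≤ ‖z‖ := abs_re_le_norm z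
    set s : ℝ := Real.sqrt ((‖z‖ + a)/2) with hs
    set t : ℝ := Real.sign b * Real.sqrt ((‖z‖ - a)/2) with ht
    have hs2 : s^2 = (‖z‖ + a)/2 := Real.sq_sqrt (by cases abs_le.mp hza; linarith)
    have ht2 : t^2 = (‖z‖ - a)/2 := by
      rw [ht, mul_pow, Real.sq_sqrt (by cases abs_le.mp hza; linarith)]
      rcases Real.sign_apply_eq_of_ne_zero b hb with h | h <;> rw [h] <;> ring
    have hsb : Real.sign b * |b| = b := by
      rcases lt_or_gt_of_ne hb with h | h
      · rw [Real.sign_of_neg h, abs_of_neg h]; ring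
      · rw [Real.sign_of_pos h, abs_of_pos h]; ring
    have hst : 2*(s*t) = b := by
      rw [hs, ht]
      rw [show Real.sqrt ((‖z‖ + a) / 2) * (Real.sign b * Real.sqrt ((‖z‖ - a) / 2))
        = Real.sign b * (Real.sqrt ((‖z‖ + a) / 2) * Real.sqrt ((‖z‖ - a) / 2)) by ring]
      rw [← Real.sqrt_mul (by cases abs_le.mp hza; linarith)]
      have hnorm : ‖z‖^2 = a*a + b*b := norm_sq_eq_def
      have h4 : (‖z‖ + a) / 2 * ((‖z‖ - a) / 2) = (b/2)^2 := by nlinarith [hnorm]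
      rw [h4, Real.sqrt_sq_eq_abs]
      rw [show Real.sign b * |b/2| = Real.sign b * |b| / 2 by rw [abs_div]; simp; ring]
      rw [hsb]; ring
    have hw2 : ((s:𝔽) + (t:𝔽)*I)^2 = z := by
      have key : ((s:𝔽) + (t:𝔽)*I)^2 = ((s^2 - t^2 : ℝ) : 𝔽) + ((2*(s*t) : ℝ) : 𝔽) * I := by
        push_cast
        linear_combination ((t:𝔽))^2 * hI
      rw [key, hst, hs2, ht2]
      rw [show (‖z‖ + a)/2 - (‖z‖ - a)/2 = a by ring]
      exact re_add_im z
    refine ⟨1, (s:𝔽) + (t:𝔽)*I, Or.inl rfl, ?_, ?_, ?_⟩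
    · intro h
      rw [h] at hw2
      apply hc
      have : z = 0 := by rw [← hw2]; ring
      rw [hz] at this
      simpa using this
    · rw [hw2, hz, inv_mul_cancel₀ hc]
    · intro r hrr
      exfalso
      apply him
      rw [hrr, algebraMap_eq_ofReal]
      exact ofReal_im r

open Polynomial in
lemma my_sqrt {𝔽 : Type*} [Field 𝔽] [CharZero 𝔽] (g : ℕ → 𝔽) (w : 𝔽) (hw : w ≠ 0)
    (h0 : w ^ 2 = g 0) (n : ℕ) :
    ∃ f : Polynomial 𝔽, f.coeff 0 = w ∧ f.natDegree < n + 1 ∧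
      ∀ t ≤ n, (f * f).coeff t = g t := by
  induction n with
  | zero =>
    refine ⟨C w, coeff_C_zero, by simp, ?_⟩
    intro t ht
    interval_cases t
    rw [← C_mul, coeff_C_zero, ← sq, h0]
  | succ n ih =>
    obtain ⟨f, hf0, hdeg, hft⟩ := ih
    set δ : 𝔽 := (g (n+1) - (f*f).coeff (n+1)) / (2*w) with hδ
    refine ⟨f + C δ * X^(n+1), ?_, ?_, ?_⟩
    · simp [hf0, coeff_X_pow]
    · apply Nat.lt_succ_of_le
      apply le_trans (natDegree_add_le _ _)
      simp only [max_le_iff]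
      constructor
      · omega
      · exact le_trans (natDegree_C_mul_le _ _) (by simp)
    · intro t ht
      have expand : (f + C δ * X^(n+1)) * (f + C δ * X^(n+1))
          = f*f + ((C δ * f) * 2) * X^(n+1) + ((C δ * C δ) * X^(n+1)) * X^(n+1) := by
        ring
      rw [expand]
      simp only [coeff_add, coeff_mul_X_pow']
      rcases Nat.lt_or_ge t (n+1) with h | h
      · rw [if_neg (by omega), if_neg (by omega)]
        rw [hft t (by omega)]
        ring
      · have ht1 : t = n + 1 := by omega
        subst ht1
        rw [if_pos le_rfl, if_pos le_rfl]
        simp only [Nat.sub_self]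
        have h1 : (C δ * f * 2).coeff 0 = δ * w * 2 := by
          simp [coeff_C_mul, hf0]  -- hopes
        rw [h1, if_neg (show ¬ n+1 ≤ 0 by omega), hδ]
        field_simp
        ring

open Polynomial Finset in
lemma my_conv {R : Type*} [CommRing R] (f : Polynomial R) (N : ℕ) (hf : f.natDegree < N)
    (φ : ℕ → R) :
    ∑ k ∈ range N, ∑ l ∈ range N, f.coeff k * f.coeff l * φ (k + l)
      = ∑ m ∈ range (2 * N), (f * f).coeff m * φ m := by
  have hR : ∀ m, (f * f).coeff m * φ m
      = ∑ ij ∈ Finset.HasAntidiagonal.antidiagonal m, f.coeff ij.1 * f.coeff ij.2 * φ (ij.1 + ij.2) := by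
    intro m
    rw [coeff_mul, sum_mul]
    apply Finset.sum_congr rfl
    intro ij hij
    rw [Finset.HasAntidiagonal.mem_antidiagonal.mp hij]
  simp only [hR]
  set F : ℕ × ℕ → R := fun ij => f.coeff ij.1 * f.coeff ij.2 * φ (ij.1 + ij.2) with hF
  have hL : ∑ k ∈ range N, ∑ l ∈ range N, f.coeff k * f.coeff l * φ (k + l)
      = ∑ ij ∈ (range N ×ˢ range N), F ij := by
    rw [Finset.sum_product]
  rw [hL]
  set s'' : Finset (ℕ × ℕ) := (range (2*N) ×ˢ range (2*N)).filter (fun x => x.1 + x.2 < 2*N)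
    with hs
  have step1 : ∑ ij ∈ (range N ×ˢ range N), F ij = ∑ ij ∈ s'', F ij := by
    apply Finset.sum_subset
    · intro x hx
      simp only [hs, Finset.mem_filter, Finset.mem_product, Finset.mem_range] at *
      omega
    · intro x hx hx2
      simp only [hs, Finset.mem_filter, Finset.mem_product, Finset.mem_range] at hx hx2
      have : N ≤ x.1 ∨ N ≤ x.2 := by omega
      show f.coeff x.1 * f.coeff x.2 * φ (x.1 + x.2) = 0
      rcases this with h | h
      · rw [coeff_eq_zero_of_natDegree_lt (show f.natDegree < x.1 by omega)]; ring
      · rw [coeff_eq_zero_of_natDegree_lt (show f.natDegree < x.2 by omega)]; ring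
  rw [step1]
  rw [← Finset.sum_fiberwise_of_maps_to (g := fun x : ℕ × ℕ => x.1 + x.2) (t := range (2*N))
    (fun x hx => by simp only [hs, Finset.mem_filter] at hx; exact mem_range.mpr hx.2) F]
  apply Finset.sum_congr rfl
  intro m hm
  apply Finset.sum_congr _ (fun _ _ => rfl)
  ext ⟨i, j⟩
  simp only [hs, Finset.mem_filter, Finset.mem_product, Finset.mem_range,
    Finset.HasAntidiagonal.mem_antidiagonal]
  simp only [Finset.mem_range] at hm
  omega

/-- Let `V` be a scalar product space over `𝔽 = ℝ` or `ℂ`, `T` a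
self-adjoint operator, `lam` an eigenvalue of `T`, and `x` a vector with
`(T - lam•1)^p x = 0` and `(T - lam•1)^(p-1) x ≠ 0`.  Set `U = T - lam•1`,
`v i = U^(p-i) x`, `H = span {v 1, …, v p}`, and suppose `B (v 1) (v p) ≠ 0`.  Then
there is `x' ∈ H` with `U^(p-1) x' ≠ 0` whose cycle `v' i = U^(p-i) x'` spans `H` and
forms a skew-normal sequence of some sign `ε ∈ {1, -1}`; when the value
`B (v 1) (v p)` is real (in particular whenever `𝔽 = ℝ`) the sign `ε` is the sign of
that value, while over `ℂ` a sign can always be achieved. -/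
theorem cycle_can_be_adapted
    {𝔽 : Type*} [RCLike 𝔽] {V : Type*} [AddCommGroup V] [Module 𝔽 V]
    [FiniteDimensional 𝔽 V]
    (B : V →ₗ[𝔽] V →ₗ[𝔽] 𝔽) (hsymm : ∀ x y, B x y = B y x)
    (hnondeg : ∀ x, (∀ y, B x y = 0) → x = 0)
    (T : Module.End 𝔽 V) (hT : ∀ x y, B (T x) y = B x (T y))
    (lam : 𝔽) (hlam : ∃ v, v ≠ 0 ∧ T v = lam • v)
    (p : ℕ) (hp : 0 < p) (x : V)
    (hxp : ((T - lam • 1) ^ p) x = 0)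
    (hxp1 : ((T - lam • 1) ^ (p - 1)) x ≠ 0)
    (H : Submodule 𝔽 V)
    (hH : H = Submodule.span 𝔽 ((fun i => ((T - lam • 1) ^ (p - i)) x) '' Set.Icc 1 p))
    (hv1p : B (((T - lam • 1) ^ (p - 1)) x) x ≠ 0) :
    ∃ x' ∈ H, ((T - lam • 1) ^ (p - 1)) x' ≠ 0 ∧
      Submodule.span 𝔽 ((fun i => ((T - lam • 1) ^ (p - i)) x') '' Set.Icc 1 p) = H ∧
      ∃ ε : 𝔽, (ε = 1 ∨ ε = -1) ∧
        (∀ i j, 1 ≤ i → i ≤ p → 1 ≤ j → j ≤ p →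
          B (((T - lam • 1) ^ (p - i)) x') (((T - lam • 1) ^ (p - j)) x') =
            if i + j = p + 1 then ε else 0) ∧
        (∀ r : ℝ, B (((T - lam • 1) ^ (p - 1)) x) x = algebraMap ℝ 𝔽 r →
          ε = algebraMap ℝ 𝔽 (Real.sign r)) := by
  subst hH
  set U : Module.End 𝔽 V := T - lam • 1 with hU
  -- adjointness
  have hadj : ∀ a b : V, B (U a) b = B a (U b) := by
    intro a b
    have h1 : U a = T a - lam • a := by simp [hU]
    have h2 : U b = T b - lam • b := by simp [hU]
    rw [h1, h2, map_sub, map_smul]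
    simp only [LinearMap.sub_apply, LinearMap.smul_apply, smul_eq_mul, map_sub, map_smul,
      smul_eq_mul]
    rw [hT]
  have hadjpow : ∀ m (a b : V), B ((U ^ m) a) b = B a ((U ^ m) b) := by
    intro m
    induction m with
    | zero => intro a b; simp
    | succ m ih =>
      intro a b
      rw [pow_succ, Module.End.mul_apply, ih, hadj, ← Module.End.mul_apply, ← pow_succ']
      rw [pow_succ]
  have hzero : ∀ m, p ≤ m → (U ^ m) x = 0 := by
    intro m hm
    have : U ^ m = U ^ (m - p) * U ^ p := by rw [← pow_add]; congr 1; omega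
    rw [this, Module.End.mul_apply, hxp, map_zero]
  set φ : ℕ → 𝔽 := fun m => B ((U ^ m) x) x with hφ
  have hφ0 : ∀ m, p ≤ m → φ m = 0 := by
    intro m hm
    show B ((U ^ m) x) x = 0
    rw [hzero m hm, map_zero, LinearMap.zero_apply]
  have hBmn : ∀ m n, B ((U ^ m) x) ((U ^ n) x) = φ (m + n) := by
    intro m n
    rw [hadjpow, hφ, hsymm]
    congr 1
    rw [← Module.End.mul_apply, ← pow_add]
  set c : 𝔽 := φ (p - 1) with hcdef
  have hc : c ≠ 0 := hv1p
  obtain ⟨ε, w, hεpm, hw0, hwc, hεsign⟩ := my_eps c hc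
  -- power series
  set Φ : PowerSeries 𝔽 := PowerSeries.mk (fun t => φ (p - 1 - t)) with hΦ
  have hΦ0 : PowerSeries.constantCoeff Φ = c := by
    rw [hΦ, ← PowerSeries.coeff_zero_eq_constantCoeff, PowerSeries.coeff_mk, Nat.sub_zero]
  set g : PowerSeries 𝔽 := PowerSeries.C ε * Φ⁻¹ with hg
  have hg0 : PowerSeries.coeff 0 g = w ^ 2 := by
    rw [hg, PowerSeries.coeff_zero_eq_constantCoeff, map_mul, PowerSeries.constantCoeff_C,
      PowerSeries.constantCoeff_inv, hΦ0]
    field_simp [hc]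
    linear_combination hwc.symm
  have hgΦ : g * Φ = PowerSeries.C ε := by
    rw [hg, mul_assoc, PowerSeries.inv_mul_cancel Φ (hΦ0 ▸ hc), mul_one]
  obtain ⟨f, hf0, hfdeg, hff⟩ := my_sqrt (fun t => PowerSeries.coeff t g) w hw0 hg0.symm (p - 1)
  have hfdegp : f.natDegree < p := by omega
  set x' : V := (Polynomial.aeval U f) x with hx'
  have hUx' : ∀ d, (U ^ d) x' = ∑ k ∈ Finset.range p, f.coeff k • (U ^ (d + k)) x := by
    intro d
    rw [hx', Polynomial.aeval_eq_sum_range' hfdegp]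
    simp only [LinearMap.coe_sum, Finset.sum_apply, LinearMap.smul_apply, map_sum, map_smul]
    apply Finset.sum_congr rfl
    intro k _
    congr 1
    rw [pow_add, Module.End.mul_apply]
  have hUmx'0 : ∀ m, p ≤ m → (U ^ m) x' = 0 := by
    intro m hm
    rw [hUx']
    apply Finset.sum_eq_zero
    intro k _
    rw [hzero _ (by omega), smul_zero]
  -- Gram computation
  have hB2 : ∀ d e, B ((U ^ d) x') ((U ^ e) x')
      = ∑ m ∈ Finset.range (2 * p), (f * f).coeff m * φ (d + e + m) := by
    intro d e
    rw [hUx' d, hUx' e]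
    simp only [map_sum, LinearMap.coe_sum, Finset.sum_apply, map_smul, LinearMap.smul_apply,
      smul_eq_mul]
    have key : ∀ k l : ℕ, (B ((U ^ (d + k)) x)) ((U ^ (e + l)) x) = φ (d + e + (k + l)) := by
      intro k l
      rw [hBmn]
      congr 1
      omega
    simp only [key]
    rw [← my_conv f p hfdegp (fun m => φ (d + e + m))]
    apply Finset.sum_congr rfl
    intro k _
    rw [Finset.mul_sum]
    refine Finset.sum_congr rfl fun l _ => ?_
    beta_reduce
    rw [Nat.add_comm l k]
    ring
  -- the values
  have hval : ∀ i j, 1 ≤ i → i ≤ p → 1 ≤ j → j ≤ p →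
      B ((U ^ (p - i)) x') ((U ^ (p - j)) x') = if i + j = p + 1 then ε else 0 := by
    intro i j hi hip hj hjp
    rw [hB2]
    rcases le_or_gt (i + j) p with hs | hs
    · rw [if_neg (by omega)]
      apply Finset.sum_eq_zero
      intro m _
      rw [hφ0 _ (by omega)]
      ring
    · set t := i + j - (p + 1) with htdef
      have htp : t ≤ p - 1 := by omega
      have hd : p - i + (p - j) = p - 1 - t := by omega
      rw [hd]
      have split : ∑ m ∈ Finset.range (2 * p), (f * f).coeff m * φ (p - 1 - t + m)
          = ∑ m ∈ Finset.range (t + 1), (f * f).coeff m * φ (p - 1 - t + m) := by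
        symm
        apply Finset.sum_subset
        · intro m hm; simp only [Finset.mem_range] at *; omega
        · intro m hm1 hm2
          simp only [Finset.mem_range] at hm1 hm2
          rw [hφ0 _ (by omega)]
          ring
      rw [split]
      have hcoef : ∀ m ∈ Finset.range (t + 1), (f * f).coeff m * φ (p - 1 - t + m)
          = PowerSeries.coeff m g * PowerSeries.coeff (t - m) Φ := by
        intro m hm
        simp only [Finset.mem_range] at hm
        rw [hff m (by omega), hΦ, PowerSeries.coeff_mk]
        congr 2
        omega
      rw [Finset.sum_congr rfl hcoef]
      have hconv : ∑ m ∈ Finset.range (t + 1), PowerSeries.coeff m g * PowerSeries.coeff (t - m) Φ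
          = PowerSeries.coeff t (g * Φ) := by
        rw [PowerSeries.coeff_mul, Finset.Nat.sum_antidiagonal_eq_sum_range_succ_mk]
      rw [hconv, hgΦ, PowerSeries.coeff_C]
      by_cases h : i + j = p + 1
      · rw [if_pos h, if_pos (by omega)]
      · rw [if_neg (by omega), if_neg h]
  -- nonvanishing
  have hUp1x' : (U ^ (p - 1)) x' = w • (U ^ (p - 1)) x := by
    rw [hUx']
    rw [Finset.sum_eq_single 0]
    · rw [hf0, Nat.add_zero]
    · intro k _ hk0
      rw [hzero _ (by omega), smul_zero]
    · intro h
      simp only [Finset.mem_range] at h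
      omega
  have hx'ne : (U ^ (p - 1)) x' ≠ 0 := by
    rw [hUp1x']
    exact smul_ne_zero hw0 hxp1
  -- membership of x'
  have hx'H : x' ∈ Submodule.span 𝔽 ((fun i => (U ^ (p - i)) x) '' Set.Icc 1 p) := by
    have : x' = (U ^ 0) x' := by simp
    rw [this, hUx']
    apply Submodule.sum_mem
    intro k hk
    simp only [Finset.mem_range] at hk
    apply Submodule.smul_mem
    apply Submodule.subset_span
    refine ⟨p - k, ⟨by omega, by omega⟩, ?_⟩
    simp only
    rw [show p - (p - k) = 0 + k by omega]
  -- U-invariance of H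
  have hUH : ∀ y ∈ Submodule.span 𝔽 ((fun i => (U ^ (p - i)) x) '' Set.Icc 1 p),
      U y ∈ Submodule.span 𝔽 ((fun i => (U ^ (p - i)) x) '' Set.Icc 1 p) := by
    intro y hy
    induction hy using Submodule.span_induction with
    | mem z hz =>
      obtain ⟨i, hi, rfl⟩ := hz
      simp only [Set.mem_Icc] at hi
      have : U ((U ^ (p - i)) x) = (U ^ (p - i + 1)) x := by
        rw [pow_succ', Module.End.mul_apply]
      rw [this]
      rcases eq_or_lt_of_le hi.1 with h1 | h1
      · rw [show p - i + 1 = p by omega, hxp]  -- i = 1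
        exact Submodule.zero_mem _
      · apply Submodule.subset_span
        refine ⟨i - 1, ⟨by omega, by omega⟩, ?_⟩
        simp only
        rw [show p - (i - 1) = p - i + 1 by omega]
    | zero => rw [map_zero]; exact Submodule.zero_mem _
    | add a b _ _ iha ihb => rw [map_add]; exact Submodule.add_mem _ iha ihb
    | smul a z _ ihz => rw [map_smul]; exact Submodule.smul_mem _ _ ihz
  have hUmH : ∀ m y, y ∈ Submodule.span 𝔽 ((fun i => (U ^ (p - i)) x) '' Set.Icc 1 p) →
      (U ^ m) y ∈ Submodule.span 𝔽 ((fun i => (U ^ (p - i)) x) '' Set.Icc 1 p) := by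
    intro m
    induction m with
    | zero => intro y hy; simpa using hy
    | succ m ih =>
      intro y hy
      rw [pow_succ, Module.End.mul_apply]
      exact ih _ (hUH _ hy)
  -- inverse polynomial
  have hfc0 : PowerSeries.constantCoeff (f : PowerSeries 𝔽) ≠ 0 := by
    rw [← PowerSeries.coeff_zero_eq_constantCoeff, Polynomial.coeff_coe, hf0]
    exact hw0
  set q : Polynomial 𝔽 := PowerSeries.trunc p ((f : PowerSeries 𝔽)⁻¹) with hqdef
  have hfq : (Polynomial.X : Polynomial 𝔽) ^ p ∣ f * q - 1 := by
    rw [Polynomial.X_pow_dvd_iff]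
    intro d hd
    rw [Polynomial.coeff_sub, Polynomial.coeff_mul]
    have h1 : ∀ ij ∈ Finset.HasAntidiagonal.antidiagonal d, f.coeff ij.1 * q.coeff ij.2
        = f.coeff ij.1 * PowerSeries.coeff ij.2 ((f : PowerSeries 𝔽)⁻¹) := by
      intro ij hij
      have := Finset.HasAntidiagonal.mem_antidiagonal.mp hij
      rw [hqdef, PowerSeries.coeff_trunc, if_pos (by omega)]
    rw [Finset.sum_congr rfl h1]
    have h2 : ∑ ij ∈ Finset.HasAntidiagonal.antidiagonal d, f.coeff ij.1 * PowerSeries.coeff ij.2 ((f : PowerSeries 𝔽)⁻¹)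
        = PowerSeries.coeff d ((f : PowerSeries 𝔽) * (f : PowerSeries 𝔽)⁻¹) := by
      rw [PowerSeries.coeff_mul]
      apply Finset.sum_congr rfl
      intro ij _
      rw [Polynomial.coeff_coe]
    rw [h2, PowerSeries.mul_inv_cancel _ hfc0]
    rw [PowerSeries.coeff_one, Polynomial.coeff_one]
    simp only [sub_eq_zero]
  obtain ⟨h, hh⟩ := hfq
  have hxq : (Polynomial.aeval U q) x' = x := by
    rw [hx', ← Module.End.mul_apply, ← map_mul]
    have h2 : q * f = 1 + h * Polynomial.X ^ p := by linear_combination hh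
    rw [h2, map_add, map_one, map_mul, Polynomial.aeval_X_pow]
    rw [LinearMap.add_apply, Module.End.one_apply, Module.End.mul_apply, hxp, map_zero, add_zero]
  have hcomm : ∀ (m : ℕ) (y : V),
      (U ^ m) ((Polynomial.aeval U q) y) = (Polynomial.aeval U q) ((U ^ m) y) := by
    intro m y
    have hmul : U ^ m * Polynomial.aeval U q = Polynomial.aeval U q * U ^ m := by
      have h2 := (Commute.all (Polynomial.X ^ m : Polynomial 𝔽) q).map (Polynomial.aeval U)
      simpa [Commute, SemiconjBy, Polynomial.aeval_X_pow] using h2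
    calc (U ^ m) ((Polynomial.aeval U q) y) = (U ^ m * Polynomial.aeval U q) y := rfl
      _ = (Polynomial.aeval U q * U ^ m) y := by rw [hmul]
      _ = (Polynomial.aeval U q) ((U ^ m) y) := rfl
  refine ⟨x', hx'H, hx'ne, ?_, ε, hεpm, hval, hεsign⟩
  apply le_antisymm
  · rw [Submodule.span_le]
    rintro _ ⟨i, hi, rfl⟩
    exact hUmH _ _ hx'H
  · rw [Submodule.span_le]
    rintro _ ⟨i, hi, rfl⟩
    simp only [Set.mem_Icc] at hi
    show (U ^ (p - i)) x ∈ _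
    rw [← hxq, hcomm]
    have hsum : (Polynomial.aeval U q) ((U ^ (p - i)) x')
        = ∑ k ∈ Finset.range (q.natDegree + 1), q.coeff k • (U ^ (p - i + k)) x' := by
      rw [Polynomial.aeval_eq_sum_range]
      simp only [LinearMap.coe_sum, Finset.sum_apply, LinearMap.smul_apply]
      refine Finset.sum_congr rfl fun k _ => ?_
      congr 1
      rw [← Module.End.mul_apply, ← pow_add, Nat.add_comm k (p - i)]
    rw [hsum]
    apply Submodule.sum_mem
    intro k _
    apply Submodule.smul_mem
    rcases le_or_gt p (p - i + k) with hk | hk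
    · rw [hUmx'0 _ hk]
      exact Submodule.zero_mem _
    · apply Submodule.subset_span
      refine ⟨i - k, ⟨by omega, by omega⟩, ?_⟩
      simp only
      rw [show p - (i - k) = p - i + k by omega]
end

section
/- Let V be a real scalar product space, T a self-adjoint linear operator on V, λ ∈ ℝ an eigenvalue of T, and x a vector with (T−λI)^p x = 0 and (T−λI)^{p−1} x ≠ 0 such that the vectors v_i = (T−λI)^{p−i} x form a skew-normal sequence of sign ε = ⟨v_1,v_p⟩ = ±1. Then H = span{v_1,…,v_p} is a nondegenerate subspace with dim H = p and index equal to ⌊(p+1)/2⌋ if ε = −1, and p − ⌊(p+1)/2⌋ if ε = 1. -/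
/-- Let `V` be a real scalar product space, `T` a self-adjoint operator
on `V`, `lam ∈ ℝ` an eigenvalue of `T`, and `x` a vector with `(T - lam•1)^p x = 0` and
`(T - lam•1)^(p-1) x ≠ 0` such that the vectors `v i = (T - lam•1)^(p-i) x` form a
skew-normal sequence of sign `ε = B (v 1) (v p) = ±1`.  Then `H = span {v 1, …, v p}`
is a nondegenerate subspace of dimension `p` whose index (computed in any orthogonal
basis of `±1`-vectors of `H`) is `⌊(p+1)/2⌋` if `ε = -1` and `p - ⌊(p+1)/2⌋` if `ε = 1`. -/
theorem real_cycle_subspace_nondegenerate_dim_index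
    {V : Type*} [AddCommGroup V] [Module ℝ V] [FiniteDimensional ℝ V]
    (B : V →ₗ[ℝ] V →ₗ[ℝ] ℝ) (hsymm : ∀ x y, B x y = B y x)
    (hnondeg : ∀ x, (∀ y, B x y = 0) → x = 0)
    (T : Module.End ℝ V) (hT : ∀ x y, B (T x) y = B x (T y))
    (lam : ℝ) (hlam : ∃ v, v ≠ 0 ∧ T v = lam • v)
    (p : ℕ) (hp : 0 < p) (x : V)
    (hxp : ((T - lam • 1) ^ p) x = 0)
    (hxp1 : ((T - lam • 1) ^ (p - 1)) x ≠ 0)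
    (ε : ℝ) (hε : ε = 1 ∨ ε = -1)
    (hskew : ∀ i j, 1 ≤ i → i ≤ p → 1 ≤ j → j ≤ p →
      B (((T - lam • 1) ^ (p - i)) x) (((T - lam • 1) ^ (p - j)) x) =
        if i + j = p + 1 then ε else 0)
    (H : Submodule ℝ V)
    (hH : H = Submodule.span ℝ ((fun i => ((T - lam • 1) ^ (p - i)) x) '' Set.Icc 1 p)) :
    (∀ z ∈ H, (∀ y ∈ H, B z y = 0) → z = 0) ∧
    Module.finrank ℝ ↥H = p ∧
    ∃ w : Fin p → V,
      Submodule.span ℝ (Set.range w) = H ∧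
      LinearIndependent ℝ w ∧
      (∀ i j, i ≠ j → B (w i) (w j) = 0) ∧
      (∀ i, B (w i) (w i) = 1 ∨ B (w i) (w i) = -1) ∧
      (Finset.univ.filter fun i => B (w i) (w i) = -1).card =
        (if ε = -1 then (p + 1) / 2 else p - (p + 1) / 2) := by
  have hε0 : ε ≠ 0 := by rcases hε with h | h <;> rw [h] <;> norm_num
  set v : Fin p → V := fun i => ((T - lam • 1) ^ (p - (i.val + 1))) x with hv
  have hgram : ∀ i j : Fin p, B (v i) (v j) = if i.val + j.val + 1 = p then ε else 0 := by
    intro i j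
    have h := hskew (i.val + 1) (j.val + 1) (by omega) (by omega) (by omega) (by omega)
    rw [h]
    congr 1
    simp only [eq_iff_iff]
    omega
  -- rev
  have hlt : ∀ i : Fin p, p - 1 - i.val < p := fun i => by omega
  set rev : Fin p → Fin p := fun i => ⟨p - 1 - i.val, hlt i⟩ with hrev
  have hrr : ∀ i, rev (rev i) = i := by
    intro i; apply Fin.ext; simp only [hrev]; omega
  have hgram' : ∀ i j : Fin p, B (v i) (v j) = if i = rev j then ε else 0 := by
    intro i j
    rw [hgram]
    congr 1
    simp only [Fin.ext_iff, hrev, eq_iff_iff]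
    omega
  -- linear independence of v
  have hli : LinearIndependent ℝ v := by
    rw [Fintype.linearIndependent_iff]
    intro c hc i
    have h1 : B (∑ j, c j • v j) (v (rev i)) = c i * ε := by
      rw [map_sum]
      simp only [LinearMap.coe_sum, Finset.sum_apply, map_smul, LinearMap.smul_apply,
        smul_eq_mul, hgram', hrr]
      rw [Finset.sum_eq_single i]
      · simp
      · intro b _ hb; simp [hb]
      · simp
    rw [hc] at h1
    simp only [map_zero, LinearMap.zero_apply] at h1
    have := h1.symm
    rcases mul_eq_zero.1 this with h | h
    · exact h
    · exact absurd h hε0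
  -- range equality
  have hrange : Set.range v = (fun i => ((T - lam • 1) ^ (p - i)) x) '' Set.Icc 1 p := by
    ext y
    constructor
    · rintro ⟨i, rfl⟩
      exact ⟨i.val + 1, ⟨by omega, by omega⟩, rfl⟩
    · rintro ⟨i, ⟨h1i, hip⟩, rfl⟩
      refine ⟨⟨i - 1, by omega⟩, ?_⟩
      simp only [hv]
      congr 2
      omega
  have hHspan : H = Submodule.span ℝ (Set.range v) := by rw [hH, ← hrange]
  -- nondegeneracy
  have hnd : ∀ z ∈ H, (∀ y ∈ H, B z y = 0) → z = 0 := by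
    intro z hz hzy
    rw [hHspan] at hz
    obtain ⟨c, hc⟩ := (Submodule.mem_span_range_iff_exists_fun ℝ).1 hz
    have hc0 : ∀ i, c i = 0 := by
      intro i
      have hvmem : v (rev i) ∈ H := by
        rw [hHspan]; exact Submodule.subset_span ⟨rev i, rfl⟩
      have h1 : B z (v (rev i)) = c i * ε := by
        rw [← hc, map_sum]
        simp only [LinearMap.coe_sum, Finset.sum_apply, map_smul, LinearMap.smul_apply,
          smul_eq_mul, hgram', hrr]
        rw [Finset.sum_eq_single i]
        · simp
        · intro b _ hb; simp [hb]
        · simp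
      rw [hzy _ hvmem] at h1
      rcases mul_eq_zero.1 h1.symm with h | h
      · exact h
      · exact absurd h hε0
    rw [← hc]
    simp [hc0]
  refine ⟨hnd, ?_, ?_⟩
  · rw [hHspan, finrank_span_eq_card hli, Fintype.card_fin]
  -- construct w
  set s : ℝ := (Real.sqrt 2)⁻¹ with hs
  have hs0 : s ≠ 0 := by
    simp only [hs, ne_eq, inv_eq_zero]
    positivity
  have hss : s * s = 2⁻¹ := by
    rw [hs, ← mul_inv, Real.mul_self_sqrt (by norm_num)]
  set w : Fin p → V := fun i =>
    if 2 * i.val + 1 < p then s • (v i + v (rev i))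
    else if 2 * i.val + 1 = p then v i
    else s • (v (rev i) - v i) with hw
  -- diagonal values
  have hdiag : ∀ i, B (w i) (w i) = if 2 * i.val + 1 ≤ p then ε else -ε := by
    intro i
    simp only [hw]
    split_ifs with h1 h2 h3 h4 h5
    · simp only [map_add, map_smul, LinearMap.add_apply, LinearMap.smul_apply, smul_eq_mul,
        hgram', hrr, Fin.ext_iff, hrev]
      split_ifs <;> try omega
      all_goals linear_combination (2 * ε) * hss
    · omega
    · simp only [hgram', Fin.ext_iff, hrev]
      split_ifs <;> try omega
      ring
    · omega
    · omega
    · simp only [map_sub, map_smul, LinearMap.sub_apply, LinearMap.smul_apply, smul_eq_mul,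
        hgram', hrr, Fin.ext_iff, hrev]
      split_ifs <;> try omega
      all_goals linear_combination (-2 * ε) * hss
  -- orthogonality
  have horth : ∀ i j, i ≠ j → B (w i) (w j) = 0 := by
    intro i j hij
    have hij' : i.val ≠ j.val := fun h => hij (Fin.ext h)
    simp only [hw]
    split_ifs <;>
    · simp only [map_add, map_sub, map_smul, LinearMap.add_apply, LinearMap.sub_apply,
        LinearMap.smul_apply, smul_eq_mul, hgram', hrr, Fin.ext_iff, hrev]
      split_ifs <;> (try omega) <;> ring
  -- span equality
  have hsub1 : Submodule.span ℝ (Set.range w) ≤ H := by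
    rw [hHspan]
    apply Submodule.span_le.2
    rintro _ ⟨i, rfl⟩
    have hmem : ∀ a : Fin p, v a ∈ Submodule.span ℝ (Set.range v) :=
      fun a => Submodule.subset_span ⟨a, rfl⟩
    simp only [hw]
    split_ifs
    · exact Submodule.smul_mem _ _ (Submodule.add_mem _ (hmem i) (hmem (rev i)))
    · exact hmem i
    · exact Submodule.smul_mem _ _ (Submodule.sub_mem _ (hmem (rev i)) (hmem i))
  have hsub2 : H ≤ Submodule.span ℝ (Set.range w) := by
    rw [hHspan]
    apply Submodule.span_le.2
    rintro _ ⟨i, rfl⟩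
    have hmem : ∀ a : Fin p, w a ∈ Submodule.span ℝ (Set.range w) :=
      fun a => Submodule.subset_span ⟨a, rfl⟩
    have hts : (2⁻¹ * s⁻¹) * s = 2⁻¹ := by
      field_simp
    rcases lt_trichotomy (2 * i.val + 1) p with h | h | h
    · -- i is the small one, rev i the large one
      have hwi : w i = s • (v i + v (rev i)) := by
        simp only [hw]; rw [if_pos h]
      have hwb : w (rev i) = s • (v i - v (rev i)) := by
        simp only [hw, hrev]
        rw [if_neg (by omega), if_neg (by omega)]
        congr 2
        · have : rev (rev i) = i := hrr i
          exact congrArg v this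
      have hvi : v i = (2⁻¹ * s⁻¹) • (w i + w (rev i)) := by
        rw [hwi, hwb, smul_add, smul_smul, smul_smul, hts]
        module
      rw [hvi]
      exact Submodule.smul_mem _ _ (Submodule.add_mem _ (hmem i) (hmem (rev i)))
    · have hwi : w i = v i := by
        simp only [hw]; rw [if_neg (by omega), if_pos h]
      rw [← hwi]; exact hmem i
    · -- i is the large one, a := rev i small
      have hwa : w (rev i) = s • (v (rev i) + v i) := by
        simp only [hw]
        rw [if_pos (by simp only [hrev, Fin.val_mk]; omega)]
        congr 2
        exact congrArg v (hrr i)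
      have hwi : w i = s • (v (rev i) - v i) := by
        simp only [hw]; rw [if_neg (by omega), if_neg (by omega)]
      have hvi : v i = (2⁻¹ * s⁻¹) • (w (rev i) - w i) := by
        rw [hwa, hwi, smul_sub, smul_smul, smul_smul, hts]
        module
      rw [hvi]
      exact Submodule.smul_mem _ _ (Submodule.sub_mem _ (hmem (rev i)) (hmem i))
  have hspanw : Submodule.span ℝ (Set.range w) = H := le_antisymm hsub1 hsub2
  -- linear independence of w
  have hdne : ∀ i, B (w i) (w i) ≠ 0 := by
    intro i
    rw [hdiag i]
    split_ifs
    · exact hε0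
    · simpa using hε0
  have hliw : LinearIndependent ℝ w := by
    rw [Fintype.linearIndependent_iff]
    intro c hc i
    have h1 : B (∑ j, c j • w j) (w i) = c i * B (w i) (w i) := by
      rw [map_sum]
      simp only [LinearMap.coe_sum, Finset.sum_apply, map_smul, LinearMap.smul_apply,
        smul_eq_mul]
      rw [Finset.sum_eq_single_of_mem i (Finset.mem_univ i)
        (fun b _ hb => by rw [horth b i hb]; ring)]
    rw [hc] at h1
    simp only [map_zero, LinearMap.zero_apply] at h1
    rcases mul_eq_zero.1 h1.symm with h | h
    · exact h
    · exact absurd h (hdne i)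
  have hpm : ∀ i, B (w i) (w i) = 1 ∨ B (w i) (w i) = -1 := by
    intro i
    rw [hdiag i]
    rcases hε with h | h <;> rw [h] <;> split_ifs <;> norm_num
  -- counting
  have hcard_lt : ∀ k, k ≤ p → (Finset.univ.filter fun i : Fin p => i.val < k).card = k := by
    intro k hk
    rw [← Finset.card_range k]
    apply Finset.card_bij' (fun a _ => a.val) (fun a ha => ⟨a, by simp at ha; omega⟩)
    · intro a ha; rfl
    · intro a ha; rfl
    · intro a ha; simp at ha ⊢; exact ha
    · intro a ha; simp at ha ⊢; exact ha
  have hk2 : (p + 1) / 2 ≤ p := by omega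
  have hcount : (Finset.univ.filter fun i => B (w i) (w i) = -1).card =
      (if ε = -1 then (p + 1) / 2 else p - (p + 1) / 2) := by
    rcases hε with h | h
    · rw [if_neg (by rw [h]; norm_num)]
      have heq : (Finset.univ.filter fun i => B (w i) (w i) = -1) =
          (Finset.univ.filter fun i : Fin p => ¬ i.val < (p + 1) / 2) := by
        apply Finset.filter_congr
        intro i _
        rw [hdiag i, h]
        constructor
        · intro hcond
          split_ifs at hcond with hc
          · norm_num at hcond
          · omega
        · intro hcond
          rw [if_neg (by omega)]
      rw [heq, Finset.filter_not, Finset.card_sdiff_of_subset (Finset.filter_subset _ _),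
        Finset.card_univ, Fintype.card_fin, hcard_lt _ hk2]
    · rw [if_pos h]
      have heq : (Finset.univ.filter fun i => B (w i) (w i) = -1) =
          (Finset.univ.filter fun i : Fin p => i.val < (p + 1) / 2) := by
        apply Finset.filter_congr
        intro i _
        rw [hdiag i, h]
        constructor
        · intro hcond
          split_ifs at hcond with hc
          · omega
          · norm_num at hcond
        · intro hcond
          rw [if_pos (by omega)]
      rw [heq, hcard_lt _ hk2]
  exact ⟨w, hspanw, hliw, horth, hpm, hcount⟩
end

section
/- Let V be a real scalar product space, T a self-adjoint linear operator on V, a,b ∈ ℝ with b ≠ 0, and suppose u_1,v_1,…,u_p,v_p are vectors in V satisfying T u_j = a u_j − b v_j + u_{j+1} and T v_j = b u_j + a v_j + v_{j+1} for j = 1,…,p (with u_{p+1} := 0, v_{p+1} := 0), and ⟨u_i,u_j⟩ = 1 = −⟨v_i,v_j⟩ whenever i+j = p+1 with all other scalar products among these vectors zero. Then H = span{u_1,v_1,…,u_p,v_p} is a nondegenerate T-invariant subspace with dim H = 2p and index p. -/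
lemma gram_aux {V : Type*} [AddCommGroup V] [Module ℝ V]
    (B : V →ₗ[ℝ] V →ₗ[ℝ] ℝ) (p : ℕ) (x : ℕ → V) (e : ℝ)
    (hxx : ∀ i j, 1 ≤ i → i ≤ p → 1 ≤ j → j ≤ p →
      B (x i) (x j) = if i + j = p + 1 then e else 0)
    (c : ℝ) (hcc : c * c = 1/2)
    (g : ℕ → V)
    (hgdef : ∀ i, g i = if 2*i < p+1 then c • (x i + x (p+1-i))
      else if 2*i = p+1 then x i else c • (x i - x (p+1-i)))
    (i j : ℕ) (hi1 : 1 ≤ i) (hip : i ≤ p) (hj1 : 1 ≤ j) (hjp : j ≤ p) :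
    B (g i) (g j) = if i = j then (if 2*i ≤ p+1 then e else -e) else 0 := by
  have hi'1 : 1 ≤ p+1-i := by omega
  have hi'p : p+1-i ≤ p := by omega
  have hj'1 : 1 ≤ p+1-j := by omega
  have hj'p : p+1-j ≤ p := by omega
  rw [hgdef i, hgdef j]
  split_ifs with h1 h2 h3 h4 h5 h6 h7 h8 h9 h10 h11 h12 h13 h14 h15 h16 h17 h18 h19 h20 <;>
    simp only [map_add, map_sub, map_smul, LinearMap.add_apply, LinearMap.sub_apply,
      LinearMap.smul_apply, smul_eq_mul,
      hxx i j hi1 hip hj1 hjp, hxx i (p+1-j) hi1 hip hj'1 hj'p,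
      hxx (p+1-i) j hi'1 hi'p hj1 hjp, hxx (p+1-i) (p+1-j) hi'1 hi'p hj'1 hj'p] <;>
    split_ifs <;>
    first
      | omega
      | linear_combination (2*e)*hcc
      | linear_combination (-2*e)*hcc
      | ring

lemma cross_aux {V : Type*} [AddCommGroup V] [Module ℝ V]
    (B : V →ₗ[ℝ] V →ₗ[ℝ] ℝ) (p : ℕ) (x y : ℕ → V)
    (hxy : ∀ i j, 1 ≤ i → i ≤ p → 1 ≤ j → j ≤ p → B (x i) (y j) = 0)
    (c : ℝ) (g f : ℕ → V)
    (hgdef : ∀ i, g i = if 2*i < p+1 then c • (x i + x (p+1-i))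
      else if 2*i = p+1 then x i else c • (x i - x (p+1-i)))
    (hfdef : ∀ i, f i = if 2*i < p+1 then c • (y i + y (p+1-i))
      else if 2*i = p+1 then y i else c • (y i - y (p+1-i)))
    (i j : ℕ) (hi1 : 1 ≤ i) (hip : i ≤ p) (hj1 : 1 ≤ j) (hjp : j ≤ p) :
    B (g i) (f j) = 0 := by
  have hi'1 : 1 ≤ p+1-i := by omega
  have hi'p : p+1-i ≤ p := by omega
  have hj'1 : 1 ≤ p+1-j := by omega
  have hj'p : p+1-j ≤ p := by omega
  rw [hgdef i, hfdef j]
  split_ifs <;>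
    simp only [map_add, map_sub, map_smul, LinearMap.add_apply, LinearMap.sub_apply,
      LinearMap.smul_apply, smul_eq_mul,
      hxy i j hi1 hip hj1 hjp, hxy i (p+1-j) hi1 hip hj'1 hj'p,
      hxy (p+1-i) j hi'1 hi'p hj1 hjp, hxy (p+1-i) (p+1-j) hi'1 hi'p hj'1 hj'p] <;>
    ring

/-- Let `V` be a real scalar product space, `T` self-adjoint,
`a b : ℝ` with `b ≠ 0`, and `u 1, v 1, …, u p, v p` vectors satisfying
`T (u j) = a • u j - b • v j + u (j+1)` and `T (v j) = b • u j + a • v j + v (j+1)`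
(for `j = 1, …, p`, with `u (p+1) = v (p+1) = 0`), with
`B (u i) (u j) = 1 = - B (v i) (v j)` when `i + j = p + 1` and all other scalar
products among them zero.  Then `H = span {u 1, v 1, …, u p, v p}` is a nondegenerate
`T`-invariant subspace of dimension `2p` and index `p`. -/
theorem complex_block_subspace_nondegenerate_dim_index
    {V : Type*} [AddCommGroup V] [Module ℝ V] [FiniteDimensional ℝ V]
    (B : V →ₗ[ℝ] V →ₗ[ℝ] ℝ) (hsymm : ∀ x y, B x y = B y x)
    (hnondeg : ∀ x, (∀ y, B x y = 0) → x = 0)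
    (T : Module.End ℝ V) (hT : ∀ x y, B (T x) y = B x (T y))
    (a b : ℝ) (hb : b ≠ 0)
    (p : ℕ) (hp : 0 < p) (u v : ℕ → V)
    (hu0 : u (p + 1) = 0) (hv0 : v (p + 1) = 0)
    (hTu : ∀ j, 1 ≤ j → j ≤ p → T (u j) = a • u j - b • v j + u (j + 1))
    (hTv : ∀ j, 1 ≤ j → j ≤ p → T (v j) = b • u j + a • v j + v (j + 1))
    (huu : ∀ i j, 1 ≤ i → i ≤ p → 1 ≤ j → j ≤ p →
      B (u i) (u j) = if i + j = p + 1 then 1 else 0)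
    (hvv : ∀ i j, 1 ≤ i → i ≤ p → 1 ≤ j → j ≤ p →
      B (v i) (v j) = if i + j = p + 1 then -1 else 0)
    (huv : ∀ i j, 1 ≤ i → i ≤ p → 1 ≤ j → j ≤ p → B (u i) (v j) = 0)
    (H : Submodule ℝ V)
    (hH : H = Submodule.span ℝ (u '' Set.Icc 1 p ∪ v '' Set.Icc 1 p)) :
    (∀ z ∈ H, (∀ y ∈ H, B z y = 0) → z = 0) ∧
    (∀ z ∈ H, T z ∈ H) ∧
    Module.finrank ℝ ↥H = 2 * p ∧
    ∃ w : Fin (2 * p) → V,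
      Submodule.span ℝ (Set.range w) = H ∧
      LinearIndependent ℝ w ∧
      (∀ i j, i ≠ j → B (w i) (w j) = 0) ∧
      (∀ i, B (w i) (w i) = 1 ∨ B (w i) (w i) = -1) ∧
      (Finset.univ.filter fun i => B (w i) (w i) = -1).card = p := by
  classical
  set c : ℝ := (Real.sqrt 2)⁻¹ with hcdef
  have hcc : c * c = 1/2 := by
    have h2 : Real.sqrt 2 * Real.sqrt 2 = 2 := Real.mul_self_sqrt (by norm_num)
    rw [hcdef, ← mul_inv, h2]; norm_num
  have hvu : ∀ i j, 1 ≤ i → i ≤ p → 1 ≤ j → j ≤ p → B (v i) (u j) = 0 := by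
    intro i j hi1 hip hj1 hjp; rw [hsymm]; exact huv j i hj1 hjp hi1 hip
  set g : ℕ → V := fun i => if 2*i < p+1 then c • (u i + u (p+1-i))
      else if 2*i = p+1 then u i else c • (u i - u (p+1-i)) with hgdef'
  set f : ℕ → V := fun i => if 2*i < p+1 then c • (v i + v (p+1-i))
      else if 2*i = p+1 then v i else c • (v i - v (p+1-i)) with hfdef'
  have hgdef : ∀ i, g i = if 2*i < p+1 then c • (u i + u (p+1-i))
      else if 2*i = p+1 then u i else c • (u i - u (p+1-i)) := fun i => rfl
  have hfdef : ∀ i, f i = if 2*i < p+1 then c • (v i + v (p+1-i))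
      else if 2*i = p+1 then v i else c • (v i - v (p+1-i)) := fun i => rfl
  have hgg := fun i j hi1 hip hj1 hjp =>
    gram_aux B p u 1 huu c hcc g hgdef i j hi1 hip hj1 hjp
  have hff := fun i j hi1 hip hj1 hjp =>
    gram_aux B p v (-1) hvv c hcc f hfdef i j hi1 hip hj1 hjp
  have hgf := fun i j hi1 hip hj1 hjp =>
    cross_aux B p u v huv c g f hgdef hfdef i j hi1 hip hj1 hjp
  have hfg := fun i j hi1 hip hj1 hjp =>
    cross_aux B p v u hvu c f g hfdef hgdef i j hi1 hip hj1 hjp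
  -- the orthogonal family
  set w : Fin (2*p) → V := fun k =>
    if (k:ℕ) < p then g ((k:ℕ)+1) else f ((k:ℕ)-p+1) with hwdef
  -- membership facts
  have huH : ∀ i, 1 ≤ i → i ≤ p → u i ∈ H := by
    intro i h1 h2; rw [hH]
    exact Submodule.subset_span (Or.inl ⟨i, ⟨h1, h2⟩, rfl⟩)
  have hvH : ∀ i, 1 ≤ i → i ≤ p → v i ∈ H := by
    intro i h1 h2; rw [hH]
    exact Submodule.subset_span (Or.inr ⟨i, ⟨h1, h2⟩, rfl⟩)
  have hgH : ∀ i, 1 ≤ i → i ≤ p → g i ∈ H := by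
    intro i h1 h2
    rw [hgdef i]
    split_ifs
    · exact H.smul_mem _ (H.add_mem (huH i h1 h2) (huH _ (by omega) (by omega)))
    · exact huH i h1 h2
    · exact H.smul_mem _ (H.sub_mem (huH i h1 h2) (huH _ (by omega) (by omega)))
  have hfH : ∀ i, 1 ≤ i → i ≤ p → f i ∈ H := by
    intro i h1 h2
    rw [hfdef i]
    split_ifs
    · exact H.smul_mem _ (H.add_mem (hvH i h1 h2) (hvH _ (by omega) (by omega)))
    · exact hvH i h1 h2
    · exact H.smul_mem _ (H.sub_mem (hvH i h1 h2) (hvH _ (by omega) (by omega)))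
  have hwH : ∀ k, w k ∈ H := by
    intro k
    have hk2 : (k:ℕ) < 2*p := k.isLt
    rw [hwdef]
    dsimp only
    split_ifs with hk
    · exact hgH _ (by omega) (by omega)
    · exact hfH _ (by omega) (by omega : (k:ℕ) - p + 1 ≤ p)
  have hc0 : c ≠ 0 := by
    intro h; rw [h] at hcc; norm_num at hcc
  have h2c0 : (2*c) ≠ 0 := by
    intro h
    have : c = 0 := by linarith [mul_comm 2 c]
    exact hc0 this
  -- diagonal values
  have hwdiag : ∀ k : Fin (2*p), B (w k) (w k) =
      if (k:ℕ) < p then (if 2*((k:ℕ)+1) ≤ p+1 then 1 else -1)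
      else (if 2*((k:ℕ)-p+1) ≤ p+1 then -1 else 1) := by
    intro k
    have hk2 : (k:ℕ) < 2*p := k.isLt
    rw [hwdef]; dsimp only
    by_cases hk : (k:ℕ) < p
    · rw [if_pos hk, if_pos hk,
        hgg _ _ (by omega) (by omega) (by omega) (by omega), if_pos rfl]
    · rw [if_neg hk, if_neg hk,
        hff _ _ (by omega) (by omega) (by omega) (by omega), if_pos rfl]
      split_ifs <;> norm_num
  have hwpm : ∀ k, B (w k) (w k) = 1 ∨ B (w k) (w k) = -1 := by
    intro k; rw [hwdiag k]; split_ifs <;> simp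
  have hworth : ∀ k l, k ≠ l → B (w k) (w l) = 0 := by
    intro k l hkl
    have hk2 : (k:ℕ) < 2*p := k.isLt
    have hl2 : (l:ℕ) < 2*p := l.isLt
    have hkl' : (k:ℕ) ≠ (l:ℕ) := fun h => hkl (Fin.ext h)
    rw [hwdef]; dsimp only
    split_ifs with h1 h2 h3
    · rw [hgg _ _ (by omega) (by omega) (by omega) (by omega), if_neg (by omega)]
    · exact hgf _ _ (by omega) (by omega) (by omega) (by omega)
    · exact hfg _ _ (by omega) (by omega) (by omega) (by omega)
    · rw [hff _ _ (by omega) (by omega) (by omega) (by omega), if_neg (by omega)]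
  -- linear independence
  have hlin : LinearIndependent ℝ w := by
    rw [Fintype.linearIndependent_iff]
    intro q hq k
    have h0 := congrArg (fun z => B z (w k)) hq
    simp only [map_sum, map_smul, LinearMap.sum_apply, LinearMap.smul_apply,
      smul_eq_mul, map_zero, LinearMap.zero_apply] at h0
    rw [Finset.sum_eq_single k (fun i _ hik => by rw [hworth i k hik, mul_zero])
      (fun h => absurd (Finset.mem_univ k) h)] at h0
    rcases hwpm k with h | h <;> rw [h] at h0 <;> linarith
  -- spanning
  have hgmem : ∀ i, 1 ≤ i → i ≤ p → g i ∈ Submodule.span ℝ (Set.range w) := by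
    intro i h1 h2
    apply Submodule.subset_span
    refine ⟨⟨i-1, by omega⟩, ?_⟩
    rw [hwdef]; dsimp only
    rw [if_pos (by omega : i-1 < p)]
    congr 1; omega
  have hfmem : ∀ i, 1 ≤ i → i ≤ p → f i ∈ Submodule.span ℝ (Set.range w) := by
    intro i h1 h2
    apply Submodule.subset_span
    refine ⟨⟨p+i-1, by omega⟩, ?_⟩
    rw [hwdef]; dsimp only
    rw [if_neg (by omega : ¬(p+i-1 < p))]
    congr 1; omega
  have huspan : ∀ i, 1 ≤ i → i ≤ p → u i ∈ Submodule.span ℝ (Set.range w) := by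
    intro i h1 h2
    have hii : p+1-(p+1-i) = i := by omega
    rcases lt_trichotomy (2*i) (p+1) with hlt | heq | hgt
    · have e1 : g i = c • (u i + u (p+1-i)) := by rw [hgdef i, if_pos hlt]
      have e2 : g (p+1-i) = c • (u (p+1-i) - u i) := by
        rw [hgdef (p+1-i), if_neg (by omega), if_neg (by omega), hii]
      have e3 : u i = (2*c)⁻¹ • (g i - g (p+1-i)) := by
        rw [e1, e2]
        match_scalars <;> field_simp <;> ring
      rw [e3]
      exact Submodule.smul_mem _ _ (sub_mem (hgmem i h1 h2)
        (hgmem (p+1-i) (by omega) (by omega)))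
    · have e1 : g i = u i := by rw [hgdef i, if_neg (by omega), if_pos heq]
      rw [← e1]; exact hgmem i h1 h2
    · have e1 : g i = c • (u i - u (p+1-i)) := by
        rw [hgdef i, if_neg (by omega), if_neg (by omega)]
      have e2 : g (p+1-i) = c • (u (p+1-i) + u i) := by
        rw [hgdef (p+1-i), if_pos (by omega), hii]
      have e3 : u i = (2*c)⁻¹ • (g i + g (p+1-i)) := by
        rw [e1, e2]
        match_scalars <;> field_simp <;> ring
      rw [e3]
      exact Submodule.smul_mem _ _ (add_mem (hgmem i h1 h2)
        (hgmem (p+1-i) (by omega) (by omega)))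
  have hvspan : ∀ i, 1 ≤ i → i ≤ p → v i ∈ Submodule.span ℝ (Set.range w) := by
    intro i h1 h2
    have hii : p+1-(p+1-i) = i := by omega
    rcases lt_trichotomy (2*i) (p+1) with hlt | heq | hgt
    · have e1 : f i = c • (v i + v (p+1-i)) := by rw [hfdef i, if_pos hlt]
      have e2 : f (p+1-i) = c • (v (p+1-i) - v i) := by
        rw [hfdef (p+1-i), if_neg (by omega), if_neg (by omega), hii]
      have e3 : v i = (2*c)⁻¹ • (f i - f (p+1-i)) := by
        rw [e1, e2]
        match_scalars <;> field_simp <;> ring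
      rw [e3]
      exact Submodule.smul_mem _ _ (sub_mem (hfmem i h1 h2)
        (hfmem (p+1-i) (by omega) (by omega)))
    · have e1 : f i = v i := by rw [hfdef i, if_neg (by omega), if_pos heq]
      rw [← e1]; exact hfmem i h1 h2
    · have e1 : f i = c • (v i - v (p+1-i)) := by
        rw [hfdef i, if_neg (by omega), if_neg (by omega)]
      have e2 : f (p+1-i) = c • (v (p+1-i) + v i) := by
        rw [hfdef (p+1-i), if_pos (by omega), hii]
      have e3 : v i = (2*c)⁻¹ • (f i + f (p+1-i)) := by
        rw [e1, e2]
        match_scalars <;> field_simp <;> ring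
      rw [e3]
      exact Submodule.smul_mem _ _ (add_mem (hfmem i h1 h2)
        (hfmem (p+1-i) (by omega) (by omega)))
  have hspan : Submodule.span ℝ (Set.range w) = H := by
    apply le_antisymm
    · rw [Submodule.span_le]; rintro x ⟨k, rfl⟩; exact hwH k
    · rw [hH, Submodule.span_le]
      rintro x (⟨i, hi, rfl⟩ | ⟨i, hi, rfl⟩)
      · exact huspan i hi.1 hi.2
      · exact hvspan i hi.1 hi.2
  -- finrank
  have hrank : Module.finrank ℝ H = 2*p := by
    rw [← hspan, finrank_span_eq_card hlin, Fintype.card_fin]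
  -- nondegeneracy
  have hnd : ∀ z ∈ H, (∀ y ∈ H, B z y = 0) → z = 0 := by
    intro z hz hperp
    rw [← hspan] at hz
    obtain ⟨q, hq⟩ := (Submodule.mem_span_range_iff_exists_fun ℝ).mp hz
    have hq0 : ∀ k, q k = 0 := by
      intro k
      have h0 := hperp (w k) (hwH k)
      rw [← hq] at h0
      simp only [map_sum, map_smul, LinearMap.sum_apply, LinearMap.smul_apply,
        smul_eq_mul] at h0
      rw [Finset.sum_eq_single k (fun i _ hik => by rw [hworth i k hik, mul_zero])
        (fun h => absurd (Finset.mem_univ k) h)] at h0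
      rcases hwpm k with h | h <;> rw [h] at h0 <;> linarith
    rw [← hq]
    simp [hq0]
  -- T-invariance
  have hinv : ∀ z ∈ H, T z ∈ H := by
    intro z hz
    rw [hH] at hz
    refine Submodule.span_induction ?_ ?_ ?_ ?_ hz
    · rintro x (⟨i, ⟨hi1, hi2⟩, rfl⟩ | ⟨i, ⟨hi1, hi2⟩, rfl⟩)
      · rw [hTu i hi1 hi2]
        refine H.add_mem (H.sub_mem (H.smul_mem _ (huH i hi1 hi2))
          (H.smul_mem _ (hvH i hi1 hi2))) ?_
        by_cases hip : i = p
        · rw [hip, hu0]; exact H.zero_mem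
        · exact huH (i+1) (by omega) (by omega)
      · rw [hTv i hi1 hi2]
        refine H.add_mem (H.add_mem (H.smul_mem _ (huH i hi1 hi2))
          (H.smul_mem _ (hvH i hi1 hi2))) ?_
        by_cases hip : i = p
        · rw [hip, hv0]; exact H.zero_mem
        · exact hvH (i+1) (by omega) (by omega)
    · rw [map_zero]; exact H.zero_mem
    · intro x y _ _ hx hy; rw [map_add]; exact H.add_mem hx hy
    · intro r x _ hx; rw [map_smul]; exact H.smul_mem r hx
  -- index count
  have hfilt : (Finset.univ.filter fun k => B (w k) (w k) = -1) =
      Finset.univ.filter (fun k : Fin (2*p) =>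
        ((k:ℕ) < p ∧ p ≤ 2*(k:ℕ)) ∨ (p ≤ (k:ℕ) ∧ 2*((k:ℕ)-p) < p)) := by
    apply Finset.filter_congr
    intro k _
    have hk2 : (k:ℕ) < 2*p := k.isLt
    rw [hwdiag k]
    split_ifs with h1 h2 h3
    · exact ⟨fun h => absurd h (by norm_num), fun h => absurd h (by omega)⟩
    · exact ⟨fun _ => by omega, fun _ => by norm_num⟩
    · exact ⟨fun _ => by omega, fun _ => by norm_num⟩
    · exact ⟨fun h => absurd h (by norm_num), fun h => absurd h (by omega)⟩
  have hcount : (Finset.univ.filter (fun k : Fin (2*p) =>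
      ((k:ℕ) < p ∧ p ≤ 2*(k:ℕ)) ∨ (p ≤ (k:ℕ) ∧ 2*((k:ℕ)-p) < p))).card = p := by
    set P : Fin (2*p) → Prop := fun k =>
      ((k:ℕ) < p ∧ p ≤ 2*(k:ℕ)) ∨ (p ≤ (k:ℕ) ∧ 2*((k:ℕ)-p) < p) with hPdef
    have hσlt : ∀ k : Fin (2*p), (if (k:ℕ) < p then (k:ℕ)+p else (k:ℕ)-p) < 2*p := by
      intro k; have := k.isLt; split_ifs <;> omega
    set σ : Fin (2*p) → Fin (2*p) :=
      fun k => ⟨if (k:ℕ) < p then (k:ℕ)+p else (k:ℕ)-p, hσlt k⟩ with hσ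
    have hσval : ∀ k : Fin (2*p), (σ k : ℕ) = if (k:ℕ) < p then (k:ℕ)+p else (k:ℕ)-p :=
      fun k => rfl
    have hsum := Finset.card_filter_add_card_filter_not
      (s := (Finset.univ : Finset (Fin (2*p)))) (p := P)
    have hbij : (Finset.univ.filter P).card =
        (Finset.univ.filter (fun k => ¬ P k)).card := by
      apply Finset.card_nbij' σ σ
      · intro x hx
        have hk2 : (x:ℕ) < 2*p := x.isLt
        simp only [Finset.coe_filter, Finset.mem_coe, Set.mem_setOf_eq, Finset.mem_filter, Finset.mem_univ, true_and, hPdef, hσval] at hx ⊢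
        split_ifs <;> omega
      · intro x hx
        have hk2 : (x:ℕ) < 2*p := x.isLt
        simp only [Finset.coe_filter, Finset.mem_coe, Set.mem_setOf_eq, Finset.mem_filter, Finset.mem_univ, true_and, hPdef, hσval] at hx ⊢
        split_ifs <;> omega
      · intro x hx
        have hk2 : (x:ℕ) < 2*p := x.isLt
        apply Fin.ext
        rw [hσval (σ x), hσval x]
        split_ifs <;> omega
      · intro x hx
        have hk2 : (x:ℕ) < 2*p := x.isLt
        apply Fin.ext
        rw [hσval (σ x), hσval x]
        split_ifs <;> omega
    have huniv : (Finset.univ : Finset (Fin (2*p))).card = 2*p := by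
      simp
    simp only [hPdef, Finset.filter_congr_decidable] at hsum hbij
    omega
  exact ⟨hnd, hinv, hrank, w, hspan, hlin, hworth, hwpm, by rw [hfilt]; exact hcount⟩
end

section
/- Let V be a real scalar product space, T a self-adjoint linear operator on V, λ ∈ ℝ an eigenvalue, and x a vector with (T−λI)^p x = 0 and (T−λI)^{p−1} x ≠ 0 such that v_i = (T−λI)^{p−i} x form a skew-normal sequence of sign ε = ±1; let H = span{v_1,…,v_p} and U = T−λI. For 0 ≤ k ≤ p−1 define the symmetric bilinear form [x,y]_k = ⟨U^k x, y⟩ on H. Then in any diagonal representation of [·,·]_k on H (i.e. any basis of H orthogonal for [·,·]_k), the number of zero diagonal entries is exactly k, and the number of negative diagonal entries is ⌊(p−k+1)/2⌋ if ε = −1 and (p−k) − ⌊(p−k+1)/2⌋ if ε = 1. -/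
open Finset Submodule Module

private lemma aux_count {p : ℕ} (P : ℕ → Prop) [DecidablePred P] :
    (Finset.univ.filter fun i : Fin p => P i.val).card = ((Finset.range p).filter P).card := by
  rw [Finset.card_filter, Finset.card_filter, ← Fin.sum_univ_eq_sum_range]

private lemma aux_rank {V : Type*} [AddCommGroup V] [Module ℝ V] {p : ℕ} {z : Fin p → V}
    (hz : LinearIndependent ℝ z) (S : Finset (Fin p)) :
    finrank ℝ (span ℝ (Set.range fun i : {i // i ∈ S} => z i.val)) = S.card := by
  have h := finrank_span_eq_card (hz.comp (Subtype.val : {i // i ∈ S} → Fin p)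
    Subtype.val_injective)
  simpa [Function.comp_def] using h

private noncomputable def vv {V : Type*} [AddCommGroup V] [Module ℝ V]
    (U : Module.End ℝ V) (p : ℕ) (x : V) : Fin p → V :=
  fun i => (U ^ (p - 1 - i.val)) x

private noncomputable def uu {V : Type*} [AddCommGroup V] [Module ℝ V]
    (U : Module.End ℝ V) (p k : ℕ) (x : V) : Fin p → V :=
  fun i =>
    if i.val < k then vv U p x i
    else if 2 * i.val < p - 1 + k then
      vv U p x i + vv U p x ⟨min (p - 1 + k - i.val) (p - 1), by have := i.isLt; omega⟩
    else if 2 * i.val = p - 1 + k then vv U p x i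
    else vv U p x i - vv U p x ⟨min (p - 1 + k - i.val) (p - 1), by have := i.isLt; omega⟩

private noncomputable def dd (p k : ℕ) (ε : ℝ) : ℕ → ℝ :=
  fun n => if n < k then 0 else if 2 * n < p - 1 + k then 2 * ε
    else if 2 * n = p - 1 + k then ε else -(2 * ε)

set_option maxHeartbeats 3200000 in
/-- Let `V` be a real scalar product space, `T` self-adjoint,
`lam ∈ ℝ` an eigenvalue, and `x` a vector with `(T - lam•1)^p x = 0`,
`(T - lam•1)^(p-1) x ≠ 0`, whose cycle `v i = (T - lam•1)^(p-i) x` is a skew-normal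
sequence of sign `ε = ±1`; let `H = span {v 1, …, v p}` and `U = T - lam•1`.  For
`0 ≤ k ≤ p - 1` consider the symmetric bilinear form `[x, y]_k = B (U^k x) y` on `H`.
Then in any basis `w` of `H` diagonalizing `[·,·]_k`, the number of zero diagonal
entries is exactly `k`, and the number of negative diagonal entries is `⌊(p-k+1)/2⌋`
if `ε = -1` and `(p-k) - ⌊(p-k+1)/2⌋` if `ε = 1`. -/
theorem cycle_bilinear_form_invariants
    {V : Type*} [AddCommGroup V] [Module ℝ V] [FiniteDimensional ℝ V]
    (B : V →ₗ[ℝ] V →ₗ[ℝ] ℝ) (hsymm : ∀ x y, B x y = B y x)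
    (hnondeg : ∀ x, (∀ y, B x y = 0) → x = 0)
    (T : Module.End ℝ V) (hT : ∀ x y, B (T x) y = B x (T y))
    (lam : ℝ) (hlam : ∃ v, v ≠ 0 ∧ T v = lam • v)
    (p : ℕ) (hp : 0 < p) (x : V)
    (hxp : ((T - lam • 1) ^ p) x = 0)
    (hxp1 : ((T - lam • 1) ^ (p - 1)) x ≠ 0)
    (ε : ℝ) (hε : ε = 1 ∨ ε = -1)
    (hskew : ∀ i j, 1 ≤ i → i ≤ p → 1 ≤ j → j ≤ p →
      B (((T - lam • 1) ^ (p - i)) x) (((T - lam • 1) ^ (p - j)) x) =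
        if i + j = p + 1 then ε else 0)
    (H : Submodule ℝ V)
    (hH : H = Submodule.span ℝ ((fun i => ((T - lam • 1) ^ (p - i)) x) '' Set.Icc 1 p))
    (k : ℕ) (hk : k ≤ p - 1)
    (w : Fin p → V) (hwH : ∀ i, w i ∈ H)
    (hwspan : Submodule.span ℝ (Set.range w) = H)
    (hwindep : LinearIndependent ℝ w)
    (hwdiag : ∀ i j, i ≠ j → B (((T - lam • 1) ^ k) (w i)) (w j) = 0) :
    (Finset.univ.filter fun i => B (((T - lam • 1) ^ k) (w i)) (w i) = 0).card = k ∧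
    (Finset.univ.filter fun i => B (((T - lam • 1) ^ k) (w i)) (w i) < 0).card =
      (if ε = -1 then (p - k + 1) / 2 else (p - k) - (p - k + 1) / 2) := by
  have hε0 : ε ≠ 0 := by rcases hε with rfl | rfl <;> norm_num
  set U : Module.End ℝ V := T - lam • 1 with hUdef
  -- self-adjointness of powers of U
  have hUadj : ∀ (n : ℕ) (a b : V), B ((U ^ n) a) b = B a ((U ^ n) b) := by
    have h1 : ∀ a b : V, B (U a) b = B a (U b) := by
      intro a b
      simp only [hUdef, LinearMap.sub_apply, LinearMap.smul_apply, Module.End.one_apply,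
        map_sub, map_smul, LinearMap.sub_apply, LinearMap.smul_apply, smul_eq_mul, hT a b]
    intro n
    induction n with
    | zero => intro a b; simp
    | succ m ih =>
      intro a b
      calc B ((U ^ (m + 1)) a) b = B ((U ^ m) (U a)) b := by
              rw [pow_succ, Module.End.mul_apply]
        _ = B (U a) ((U ^ m) b) := ih (U a) b
        _ = B a (U ((U ^ m) b)) := h1 a ((U ^ m) b)
        _ = B a ((U ^ (m + 1)) b) := by rw [pow_succ', Module.End.mul_apply]
  -- vanishing of high powers on x
  have hUx : ∀ m, p ≤ m → (U ^ m) x = 0 := by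
    intro m hm
    have : U ^ m = U ^ (m - p) * U ^ p := by rw [← pow_add]; congr 1; omega
    rw [this, Module.End.mul_apply, hxp, map_zero]
  -- Gram matrix of the cycle
  have hBv : ∀ i j : Fin p, B (vv U p x i) (vv U p x j) =
      if i.val + j.val = p - 1 then ε else 0 := by
    intro i j
    have hi := i.isLt; have hj := j.isLt
    have h := hskew (i.val + 1) (j.val + 1) (by omega) (by omega) (by omega) (by omega)
    rw [show p - (i.val + 1) = p - 1 - i.val from by omega,
      show p - (j.val + 1) = p - 1 - j.val from by omega] at h
    simp only [vv]
    rw [h]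
    exact if_congr (by omega) rfl rfl
  -- Gram matrix of the k-th form on the cycle
  have hCv : ∀ a b : Fin p, B ((U ^ k) (vv U p x a)) (vv U p x b) =
      if k ≤ a.val ∧ a.val + b.val = p - 1 + k then ε else 0 := by
    intro a b
    have ha := a.isLt; have hb := b.isLt
    have hcomp : (U ^ k) (vv U p x a) = (U ^ (k + (p - 1 - a.val))) x := by
      simp [vv, ← Module.End.mul_apply, ← pow_add]
    by_cases hak : a.val < k
    · rw [hcomp, hUx _ (by omega)]
      simp only [map_zero, LinearMap.zero_apply]
      rw [if_neg (by omega)]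
    · have h1 : k + (p - 1 - a.val) = p - 1 - (a.val - k) := by omega
      rw [hcomp, h1]
      have h2 := hBv ⟨a.val - k, by omega⟩ b
      simp only [vv, Fin.val_mk] at h2
      simp only [vv]
      rw [h2]
      exact if_congr (by omega) rfl rfl
  -- v spans H
  have hHv : Submodule.span ℝ (Set.range (vv U p x)) = H := by
    rw [hH]; congr 1
    ext y
    constructor
    · rintro ⟨i, rfl⟩
      exact ⟨i.val + 1, ⟨by omega, by have := i.isLt; omega⟩, by
        simp only [vv]; rw [show p - (i.val + 1) = p - 1 - i.val from by omega]⟩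
    · rintro ⟨m, ⟨hm1, hm2⟩, rfl⟩
      exact ⟨⟨m - 1, by omega⟩, by
        simp only [vv]; rw [show p - 1 - (m - 1) = p - m from by omega]⟩
  have hvH : ∀ j, vv U p x j ∈ H := fun j => hHv ▸ subset_span ⟨j, rfl⟩
  -- v is linearly independent
  have hvind : LinearIndependent ℝ (vv U p x) := by
    rw [Fintype.linearIndependent_iff]
    intro g hg j
    have hj := j.isLt
    have h0 : B (∑ i, g i • vv U p x i) (vv U p x ⟨p - 1 - j.val, by omega⟩) = 0 := by
      rw [hg]; simp
    simp only [map_sum, map_smul, LinearMap.coe_sum, Finset.sum_apply,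
      LinearMap.smul_apply, smul_eq_mul, hBv] at h0
    rw [Finset.sum_eq_single j (fun b _ hb => by
        rw [if_neg (fun hc => hb (Fin.ext (by omega))), mul_zero])
      (fun h => absurd (mem_univ j) h)] at h0
    rw [if_pos (by omega)] at h0
    rcases mul_eq_zero.1 h0 with h | h
    · exact h
    · exact absurd h hε0
  have hfinH : finrank ℝ H = p := by
    rw [← hHv, finrank_span_eq_card hvind, Fintype.card_fin]
  -- Gram matrix of u
  have hCu : ∀ i j : Fin p, B ((U ^ k) (uu U p k x i)) (uu U p k x j) =
      if i = j then dd p k ε i.val else 0 := by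
    intro i j
    have hip := i.isLt; have hjp := j.isLt
    rcases eq_or_ne i j with rfl | hne
    · rw [if_pos rfl]
      simp only [uu, dd]
      split_ifs with h1 h2 h3 <;>
        (simp only [map_add, map_sub, LinearMap.add_apply, LinearMap.sub_apply, hCv,
          Fin.val_mk]
         try simp only [inf_eq_min]
         (try split_ifs) <;> first | ring1 | (exfalso; omega))
    · rw [if_neg hne]
      have hne' : i.val ≠ j.val := fun h => hne (Fin.ext h)
      simp only [uu]
      split_ifs <;>
        (simp only [map_add, map_sub, LinearMap.add_apply, LinearMap.sub_apply, hCv,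
          Fin.val_mk]
         try simp only [inf_eq_min]
         (try split_ifs) <;> first | ring1 | (exfalso; omega))
  -- u spans H and is independent
  have huH : ∀ i, uu U p k x i ∈ H := by
    intro i
    simp only [uu]
    split_ifs
    · exact hvH _
    · exact add_mem (hvH _) (hvH _)
    · exact hvH _
    · exact sub_mem (hvH _) (hvH _)
  have hpair : ∀ a b : Fin p, ¬ a.val < k → 2 * a.val < p - 1 + k →
      b.val = p - 1 + k - a.val →
      uu U p k x a = vv U p x a + vv U p x b ∧
        uu U p k x b = vv U p x b - vv U p x a := by
    intro a b ha h2 hb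
    have hap := a.isLt; have hbp := b.isLt
    constructor
    · simp only [uu]
      rw [if_neg ha, if_pos h2]
      congr 1
      congr 1
      apply Fin.ext
      simp only [Fin.val_mk]
      omega
    · simp only [uu]
      rw [if_neg (by omega), if_neg (by omega), if_neg (by omega)]
      congr 1
      congr 1
      apply Fin.ext
      simp only [Fin.val_mk]
      omega
  have humem : ∀ j, uu U p k x j ∈ Submodule.span ℝ (Set.range (uu U p k x)) :=
    fun j => subset_span ⟨j, rfl⟩
  have hvmemu : ∀ i, vv U p x i ∈ Submodule.span ℝ (Set.range (uu U p k x)) := by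
    intro i
    have hip := i.isLt
    by_cases h1 : i.val < k
    · have he : uu U p k x i = vv U p x i := by simp only [uu]; rw [if_pos h1]
      exact he ▸ humem i
    by_cases h2 : 2 * i.val = p - 1 + k
    · have he : uu U p k x i = vv U p x i := by
        simp only [uu]; rw [if_neg h1, if_neg (by omega), if_pos h2]
      exact he ▸ humem i
    by_cases h3 : 2 * i.val < p - 1 + k
    · obtain ⟨hui, hum⟩ := hpair i ⟨p - 1 + k - i.val, by omega⟩ h1 h3 rfl
      have he : vv U p x i =
          (2⁻¹ : ℝ) • (uu U p k x i - uu U p k x ⟨p - 1 + k - i.val, by omega⟩) := by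
        rw [hui, hum]; module
      rw [he]
      exact smul_mem _ _ (sub_mem (humem _) (humem _))
    · obtain ⟨hua, hui⟩ := hpair ⟨p - 1 + k - i.val, by omega⟩ i
        (by simp only [Fin.val_mk]; omega) (by simp only [Fin.val_mk]; omega)
        (by simp only [Fin.val_mk]; omega)
      have he : vv U p x i =
          (2⁻¹ : ℝ) • (uu U p k x ⟨p - 1 + k - i.val, by omega⟩ + uu U p k x i) := by
        rw [hua, hui]; module
      rw [he]
      exact smul_mem _ _ (add_mem (humem _) (humem _))
  have huspan : Submodule.span ℝ (Set.range (uu U p k x)) = H := by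
    apply le_antisymm
    · rw [span_le]; rintro _ ⟨i, rfl⟩; exact huH i
    · rw [← hHv, span_le]; rintro _ ⟨i, rfl⟩; exact hvmemu i
  have huind : LinearIndependent ℝ (uu U p k x) := by
    rw [linearIndependent_iff_card_eq_finrank_span, Set.finrank, huspan, hfinH,
      Fintype.card_fin]
  -- expansion of the form on linear combinations
  have hGramSum : ∀ (z : Fin p → V) (dz : Fin p → ℝ),
      (∀ i j, B ((U ^ k) (z i)) (z j) = if i = j then dz i else 0) →
      ∀ (S : Finset (Fin p)) (c : {i // i ∈ S} → ℝ),
        B ((U ^ k) (∑ i : {i // i ∈ S}, c i • z i.val)) (∑ i : {i // i ∈ S}, c i • z i.val)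
          = ∑ i : {i // i ∈ S}, c i * c i * dz i.val := by
    intro z dz hz S c
    simp only [map_sum, map_smul, LinearMap.coe_sum, Finset.sum_apply,
      LinearMap.smul_apply, smul_eq_mul, hz]
    refine Finset.sum_congr rfl fun i _ => ?_
    rw [Finset.sum_eq_single i (fun j _ hj => by
        rw [if_neg (fun h => hj (Subtype.ext h)), mul_zero])
      (fun h => absurd (mem_univ i) h)]
    rw [if_pos rfl]
    ring
  have hNonneg : ∀ (z : Fin p → V) (dz : Fin p → ℝ),
      (∀ i j, B ((U ^ k) (z i)) (z j) = if i = j then dz i else 0) →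
      ∀ S : Finset (Fin p), (∀ i ∈ S, 0 ≤ dz i) →
      ∀ y ∈ span ℝ (Set.range fun i : {i // i ∈ S} => z i.val), 0 ≤ B ((U ^ k) y) y := by
    intro z dz hz S hS y hy
    obtain ⟨c, rfl⟩ := (mem_span_range_iff_exists_fun ℝ).mp hy
    rw [hGramSum z dz hz S c]
    exact Finset.sum_nonneg fun i _ =>
      mul_nonneg (mul_self_nonneg _) (hS i.val i.property)
  have hNeg : ∀ (z : Fin p → V) (dz : Fin p → ℝ),
      (∀ i j, B ((U ^ k) (z i)) (z j) = if i = j then dz i else 0) →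
      ∀ S : Finset (Fin p), (∀ i ∈ S, dz i < 0) →
      ∀ y ∈ span ℝ (Set.range fun i : {i // i ∈ S} => z i.val), y ≠ 0 →
        B ((U ^ k) y) y < 0 := by
    intro z dz hz S hS y hy hy0
    obtain ⟨c, rfl⟩ := (mem_span_range_iff_exists_fun ℝ).mp hy
    rw [hGramSum z dz hz S c]
    have hex : ∃ i, c i ≠ 0 := by
      by_contra hc
      push_neg at hc
      exact hy0 (by simp [hc])
    obtain ⟨i0, hi0⟩ := hex
    calc (∑ i : {i // i ∈ S}, c i * c i * dz i.val)
        < ∑ _i : {i // i ∈ S}, (0 : ℝ) := by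
          apply Finset.sum_lt_sum
          · exact fun i _ => mul_nonpos_of_nonneg_of_nonpos (mul_self_nonneg _)
              (le_of_lt (hS i.val i.property))
          · exact ⟨i0, mem_univ _,
              mul_neg_of_pos_of_neg (mul_self_pos.2 hi0) (hS i0.val i0.property)⟩
      _ = 0 := by simp
  -- the key Sylvester inequality
  have key : ∀ (z z' : Fin p → V) (dz dz' : Fin p → ℝ),
      LinearIndependent ℝ z → LinearIndependent ℝ z' →
      (∀ i, z i ∈ H) → (∀ i, z' i ∈ H) →
      (∀ i j, B ((U ^ k) (z i)) (z j) = if i = j then dz i else 0) →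
      (∀ i j, B ((U ^ k) (z' i)) (z' j) = if i = j then dz' i else 0) →
      (Finset.univ.filter fun i => dz i < 0).card ≤
        (Finset.univ.filter fun i => dz' i < 0).card := by
    intro z z' dz dz' hzind hz'ind hzH hz'H hzg hz'g
    set N : Finset (Fin p) := Finset.univ.filter (fun i => dz i < 0) with hN
    set P : Finset (Fin p) := Finset.univ.filter (fun i => ¬ dz' i < 0) with hP
    set W := span ℝ (Set.range fun i : {i // i ∈ N} => z i.val) with hW
    set Q := span ℝ (Set.range fun i : {i // i ∈ P} => z' i.val) with hQ
    have hWH : W ≤ H := span_le.2 (by rintro _ ⟨i, rfl⟩; exact hzH _)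
    have hQH : Q ≤ H := span_le.2 (by rintro _ ⟨i, rfl⟩; exact hz'H _)
    have hdisj : W ⊓ Q = ⊥ := by
      rw [eq_bot_iff]
      rintro y ⟨hyW, hyQ⟩
      rw [Submodule.mem_bot]
      by_contra hy0
      have h1 : B ((U ^ k) y) y < 0 :=
        hNeg z dz hzg N (fun i hi => (Finset.mem_filter.1 hi).2) y hyW hy0
      have h2 : 0 ≤ B ((U ^ k) y) y :=
        hNonneg z' dz' hz'g P (fun i hi => not_lt.1 (Finset.mem_filter.1 hi).2) y hyQ
      linarith
    have hsum := Submodule.finrank_sup_add_finrank_inf_eq W Q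
    rw [hdisj, finrank_bot] at hsum
    have hle : finrank ℝ ↥(W ⊔ Q) ≤ finrank ℝ ↥H :=
      Submodule.finrank_mono (sup_le hWH hQH)
    have hWr : finrank ℝ ↥W = N.card := aux_rank hzind N
    have hQr : finrank ℝ ↥Q = P.card := aux_rank hz'ind P
    have hPc : ((Finset.univ.filter fun i => dz' i < 0)).card + P.card = p := by
      have := Finset.card_filter_add_card_filter_not
        (s := (Finset.univ : Finset (Fin p))) (p := fun i => dz' i < 0)
      simpa [hP, Finset.card_univ] using this
    omega
  -- Gram matrix of w
  have hwGram : ∀ i j, B ((U ^ k) (w i)) (w j) =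
      if i = j then B ((U ^ k) (w i)) (w i) else 0 := by
    intro i j
    split_ifs with h
    · rw [h]
    · exact hwdiag i j h
  constructor
  · -- zero count
    set SZ : Finset (Fin p) := Finset.univ.filter (fun i => i.val < k) with hSZ
    set Z : Finset (Fin p) :=
      Finset.univ.filter (fun i => B ((U ^ k) (w i)) (w i) = 0) with hZ
    set K0 := span ℝ (Set.range fun i : {i // i ∈ SZ} => vv U p x i.val) with hK0
    have hK0H : K0 ≤ H := span_le.2 (by rintro _ ⟨i, rfl⟩; exact hvH _)
    have hK0ker : ∀ h ∈ K0, (U ^ k) h = 0 := by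
      intro h hh
      have hle : K0 ≤ LinearMap.ker (U ^ k) := by
        rw [hK0, span_le]
        rintro _ ⟨i, rfl⟩
        have hik : (i : Fin p).val < k := (Finset.mem_filter.1 i.property).2
        have hco : (U ^ k) (vv U p x (i : Fin p)) = (U ^ (k + (p - 1 - (i : Fin p).val))) x := by
          simp [vv, ← Module.End.mul_apply, ← pow_add]
        simp only [SetLike.mem_coe, LinearMap.mem_ker]
        rw [hco, hUx _ (by have := (i : Fin p).isLt; omega)]
      exact LinearMap.mem_ker.1 (hle hh)
    have hK0C : ∀ h ∈ K0, ∀ z : V, B ((U ^ k) h) z = 0 := by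
      intro h hh z; rw [hK0ker h hh]; simp
    have hRadIn : ∀ h, h ∈ H → (∀ z ∈ H, B ((U ^ k) h) z = 0) → h ∈ K0 := by
      intro h hh hzero
      rw [← hHv] at hh
      obtain ⟨c, rfl⟩ := (mem_span_range_iff_exists_fun ℝ).mp hh
      have hcm : ∀ m : Fin p, k ≤ m.val → c m = 0 := by
        intro m hm
        have hmp := m.isLt
        have h0 := hzero _ (hvH ⟨p - 1 + k - m.val, by omega⟩)
        simp only [map_sum, map_smul, LinearMap.coe_sum, Finset.sum_apply,
          LinearMap.smul_apply, smul_eq_mul, hCv, Fin.val_mk] at h0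
        rw [Finset.sum_eq_single m (fun b _ hb => by
            rw [if_neg, mul_zero]
            rintro ⟨hb1, hb2⟩
            exact hb (Fin.ext (by omega)))
          (fun hm' => absurd (mem_univ m) hm')] at h0
        rw [if_pos ⟨hm, by omega⟩] at h0
        rcases mul_eq_zero.1 h0 with h | h
        · exact h
        · exact absurd h hε0
      apply sum_mem
      intro i _
      by_cases hik : i.val < k
      · exact smul_mem _ _ (subset_span ⟨⟨i, Finset.mem_filter.2 ⟨mem_univ _, hik⟩⟩, rfl⟩)
      · rw [hcm i (by omega), zero_smul]; exact zero_mem _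
    have hZle : span ℝ (Set.range fun i : {i // i ∈ Z} => w i.val) ≤ K0 := by
      rw [span_le]
      rintro _ ⟨i, rfl⟩
      have hiz : B ((U ^ k) (w i.val)) (w i.val) = 0 := (Finset.mem_filter.1 i.property).2
      apply hRadIn _ (hwH _)
      intro z hz
      rw [← hwspan] at hz
      obtain ⟨c, rfl⟩ := (mem_span_range_iff_exists_fun ℝ).mp hz
      simp only [map_sum, map_smul, smul_eq_mul]
      apply Finset.sum_eq_zero
      intro j _
      rcases eq_or_ne (i : Fin p) j with h | h
      · rw [← h, hiz, mul_zero]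
      · rw [hwdiag _ _ h, mul_zero]
    have hK0le : K0 ≤ span ℝ (Set.range fun i : {i // i ∈ Z} => w i.val) := by
      intro h hh
      have hhH : h ∈ H := hK0H hh
      rw [← hwspan] at hhH
      obtain ⟨c, rfl⟩ := (mem_span_range_iff_exists_fun ℝ).mp hhH
      have hcj : ∀ j : Fin p, j ∉ Z → c j = 0 := by
        intro j hj
        have hjz : ¬ B ((U ^ k) (w j)) (w j) = 0 := fun hc =>
          hj (Finset.mem_filter.2 ⟨mem_univ _, hc⟩)
        have h0 := hK0C _ hh (w j)
        simp only [map_sum, map_smul, LinearMap.coe_sum, Finset.sum_apply,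
          LinearMap.smul_apply, smul_eq_mul] at h0
        rw [Finset.sum_eq_single j (fun b _ hb => by rw [hwdiag b j hb, mul_zero])
          (fun hm' => absurd (mem_univ j) hm')] at h0
        rcases mul_eq_zero.1 h0 with h | h
        · exact h
        · exact absurd h hjz
      apply sum_mem
      intro i _
      by_cases hiz : i ∈ Z
      · exact smul_mem _ _ (subset_span ⟨⟨i, hiz⟩, rfl⟩)
      · rw [hcj i hiz, zero_smul]; exact zero_mem _
    have hZK : span ℝ (Set.range fun i : {i // i ∈ Z} => w i.val) = K0 :=
      le_antisymm hZle hK0le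
    have e1 := aux_rank hwindep Z
    rw [hZK] at e1
    have e2 := aux_rank hvind SZ
    rw [← hK0] at e2
    have e3 : SZ.card = k := by
      rw [hSZ, aux_count (fun n => n < k)]
      rw [show (Finset.range p).filter (fun n => n < k) = Finset.range k from by
        ext n; simp only [Finset.mem_filter, Finset.mem_range]; omega]
      exact Finset.card_range k
    omega
  · -- negative count
    have e1 := key (uu U p k x) w (fun i => dd p k ε i.val)
      (fun i => B ((U ^ k) (w i)) (w i)) huind hwindep huH hwH hCu hwGram
    have e2 := key w (uu U p k x) (fun i => B ((U ^ k) (w i)) (w i))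
      (fun i => dd p k ε i.val) hwindep huind hwH huH hwGram hCu
    have hcard : (Finset.univ.filter fun i => B ((U ^ k) (w i)) (w i) < 0).card
        = (Finset.univ.filter fun i : Fin p => dd p k ε i.val < 0).card :=
      le_antisymm e2 e1
    rw [hcard]
    rcases hε with rfl | rfl
    · rw [if_neg (by norm_num), aux_count (fun n => dd p k 1 n < 0)]
      have : (Finset.range p).filter (fun n => dd p k 1 n < 0)
          = Finset.Ico ((p + k + 1) / 2) p := by
        ext n
        rw [Finset.mem_filter]
        simp only [Finset.mem_filter, Finset.mem_range, Finset.mem_Ico, dd]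
        split_ifs <;> norm_num <;> omega
      rw [this, Nat.card_Ico]
      omega
    · rw [if_pos rfl, aux_count (fun n => dd p k (-1) n < 0)]
      have : (Finset.range p).filter (fun n => dd p k (-1) n < 0)
          = Finset.Ico k ((p - 1 + k) / 2 + 1) := by
        ext n
        rw [Finset.mem_filter]
        simp only [Finset.mem_filter, Finset.mem_range, Finset.mem_Ico, dd]
        split_ifs <;> norm_num <;> omega
      rw [this, Nat.card_Ico]
      omega
end

section
/- Let V = ℝ^n (n ≥ 2) with the Minkowski scalar product, let λ_1 < λ_2 < ⋯ < λ_n be real numbers, and let T_1 = diag(λ_1, λ_2, λ_3, …, λ_n) and T_2 = diag(λ_2, λ_1, λ_3, …, λ_n) (both self-adjoint with respect to the Minkowski scalar product). Then there is no invertible linear map R : V → V with ⟨Rx, Ry⟩ = ⟨x,y⟩ for all x,y ∈ V and T_2 = R ∘ T_1 ∘ R⁻¹. -/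
/-- The Minkowski scalar product on `ℝⁿ`:
`⟪x, y⟫ = -x 0 * y 0 + ∑_{i ≥ 1} x i * y i`. -/
def mink (n : ℕ) (x y : Fin n → ℝ) : ℝ :=
  ∑ i : Fin n, (if (i : ℕ) = 0 then (-1 : ℝ) else 1) * x i * y i

/-- Let `ℝⁿ` (`n ≥ 2`) carry the Minkowski scalar product, let
`lam 0 < lam 1 < ⋯ < lam (n-1)` be real numbers, and let `T₁ = diag(lam 0, lam 1, …)`
and `T₂` the diagonal operator with the first two entries interchanged.  Then there is
no invertible linear map `R` preserving the Minkowski scalar product with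
`T₂ = R ∘ T₁ ∘ R⁻¹`. -/
theorem swapped_diagonal_operators_not_isometrically_equivalent
    (n : ℕ) (hn : 2 ≤ n) (lam : Fin n → ℝ) (hlt : StrictMono lam) :
    ¬ ∃ R : (Fin n → ℝ) ≃ₗ[ℝ] (Fin n → ℝ),
        (∀ x y, mink n (R x) (R y) = mink n x y) ∧
        ∀ x, Matrix.toLin' (Matrix.diagonal
              (lam ∘ Equiv.swap (⟨0, by omega⟩ : Fin n) ⟨1, by omega⟩)) x =
            R (Matrix.toLin' (Matrix.diagonal lam) (R.symm x)) := by
  rintro ⟨R, hiso, hconj⟩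
  set i0 : Fin n := ⟨0, by omega⟩
  set i1 : Fin n := ⟨1, by omega⟩
  have hne : i0 ≠ i1 := by simp [i0, i1, Fin.ext_iff]
  set e0 : Fin n → ℝ := Pi.single i0 1 with he0
  set v : Fin n → ℝ := R e0 with hv
  -- T₁ e₀ = lam i0 • e₀
  have hT1 : Matrix.toLin' (Matrix.diagonal lam) e0 = lam i0 • e0 := by
    funext j
    simp only [Matrix.toLin'_apply, Matrix.mulVec_diagonal, Pi.smul_apply, smul_eq_mul, he0]
    rcases eq_or_ne j i0 with rfl | h
    · simp
    · simp [Pi.single_eq_of_ne h]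
  -- v is a λ₀-eigenvector of T₂
  have hev : ∀ i : Fin n, lam (Equiv.swap i0 i1 i) * v i = lam i0 * v i := by
    intro i
    have h := hconj v
    have h2 : Matrix.toLin' (Matrix.diagonal
        (lam ∘ Equiv.swap i0 i1)) v = lam i0 • v := by
      rw [h, hv, R.symm_apply_apply, hT1, map_smul]
    have := congrFun h2 i
    simpa [Matrix.toLin'_apply, Matrix.mulVec_diagonal, mul_comm] using this
  -- hence v i = 0 for i ≠ i1
  have hzero : ∀ i : Fin n, i ≠ i1 → v i = 0 := by
    intro i hi
    have hsw : Equiv.swap i0 i1 i ≠ i0 := by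
      intro h
      apply hi
      have := congrArg (Equiv.swap i0 i1) h
      simpa [Equiv.swap_apply_left] using this
    have hlamne : lam (Equiv.swap i0 i1 i) ≠ lam i0 := fun h => hsw (hlt.injective h)
    have := hev i
    rcases mul_eq_mul_right_iff.mp this with h | h
    · exact absurd h hlamne
    · exact h
  -- minkowski norm of e0 is -1
  have hm0 : mink n e0 e0 = -1 := by
    unfold mink
    rw [Finset.sum_eq_single i0]
    · simp [he0, i0]
    · intro j _ hj
      simp [he0, Pi.single_eq_of_ne hj]
    · simp
  -- minkowski norm of v is v i1 ^ 2
  have hmv : mink n v v = v i1 ^ 2 := by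
    unfold mink
    rw [Finset.sum_eq_single i1]
    · simp [i1, sq]
    · intro j _ hj
      simp [hzero j hj]
    · simp
  have := hiso e0 e0
  rw [← hv, hmv, hm0] at this
  nlinarith [sq_nonneg (v i1)]
end

section
/- Let T be a self-adjoint linear operator on Minkowski space ℝ^n (n ≥ 2). If T has two linearly independent null eigenvectors x and y, then ℝ^n admits a basis of eigenvectors of T (T is diagonalizable over ℝ), x and y are eigenvectors for the same eigenvalue λ, and the eigenspace of λ has dimension at least 2 and contains a timelike vector. -/
lemma mink_comm (n) (x y : Fin n → ℝ) : mink n x y = mink n y x := by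
  unfold mink; congr 1; ext i; ring

lemma mink_smul_left (n) (c : ℝ) (x y : Fin n → ℝ) :
    mink n (c • x) y = c * mink n x y := by
  unfold mink; rw [Finset.mul_sum]; congr 1; ext i; simp; split_ifs <;> ring

lemma mink_add_left (n) (x x' y : Fin n → ℝ) :
    mink n (x + x') y = mink n x y + mink n x' y := by
  unfold mink; rw [← Finset.sum_add_distrib]; congr 1; ext i; simp; split_ifs <;> ring

lemma mink_add_right (n) (x y y' : Fin n → ℝ) :
    mink n x (y + y') = mink n x y + mink n x y' := by
  rw [mink_comm, mink_add_left, mink_comm n y x, mink_comm n y' x]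

lemma mink_sub_left (n) (x x' y : Fin n → ℝ) :
    mink n (x - x') y = mink n x y - mink n x' y := by
  unfold mink; rw [← Finset.sum_sub_distrib]; congr 1; ext i; simp; split_ifs <;> ring

lemma mink_smul_right (n) (c : ℝ) (x y : Fin n → ℝ) :
    mink n x (c • y) = c * mink n x y := by
  rw [mink_comm, mink_smul_left, mink_comm]

lemma mink_sub_right (n) (x y y' : Fin n → ℝ) :
    mink n x (y - y') = mink n x y - mink n x y' := by
  rw [mink_comm, mink_sub_left, mink_comm n y x, mink_comm n y' x]

lemma mink_succ (m : ℕ) (x y : Fin (m+1) → ℝ) :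
    mink (m+1) x y = -(x 0 * y 0) + ∑ i : Fin m, x i.succ * y i.succ := by
  unfold mink; rw [Fin.sum_univ_succ]
  simp [Fin.val_succ]

lemma mink_spatial_eq_zero (m : ℕ) (v : Fin (m+1) → ℝ) (h0 : v 0 = 0)
    (hv : mink (m+1) v v = 0) : v = 0 := by
  rw [mink_succ, h0] at hv
  simp at hv
  have hvi : ∀ i : Fin m, v i.succ = 0 := by
    intro i
    have := (Finset.sum_eq_zero_iff_of_nonneg
      (fun i _ => mul_self_nonneg (v i.succ))).mp hv i (Finset.mem_univ i)
    nlinarith [this]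
  funext i
  rcases Fin.eq_zero_or_eq_succ i with h | ⟨j, rfl⟩
  · rw [h]; exact h0
  · exact hvi j

lemma mink_null_indep (m : ℕ) (x y : Fin (m+1) → ℝ)
    (hxy : LinearIndependent ℝ ![x, y])
    (hx0 : mink (m+1) x x = 0) (hy0 : mink (m+1) y y = 0) :
    mink (m+1) x y ≠ 0 := by
  intro horth
  have hpair := LinearIndependent.pair_iff.mp hxy
  have hxne : x ≠ 0 := by
    intro h; have := hpair 1 0 (by simp [h]); simp at this
  have hx0ne : x 0 ≠ 0 := by
    intro h
    exact hxne (mink_spatial_eq_zero m x h hx0)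
  set v := y 0 • x - x 0 • y with hv
  have hv0 : v 0 = 0 := by simp [hv]; ring
  have hyx : mink (m+1) y x = 0 := by rw [mink_comm]; exact horth
  have hvm : mink (m+1) v v = 0 := by
    simp only [hv, mink_sub_left, mink_sub_right, mink_smul_left, mink_smul_right,
      hx0, hy0, horth, hyx]
    ring
  have hveq : v = 0 := mink_spatial_eq_zero m v hv0 hvm
  have := hpair (y 0) (-(x 0)) (by rw [hv] at hveq; rw [← hveq]; module)
  exact hx0ne (neg_eq_zero.mp this.2)

lemma mink_orth_timelike (m : ℕ) (z u : Fin (m+1) → ℝ)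
    (hz : mink (m+1) z z < 0) (hu : mink (m+1) u z = 0) :
    0 ≤ mink (m+1) u u ∧ (mink (m+1) u u = 0 → u = 0) := by
  rw [mink_succ] at hz hu ⊢
  set Sz := ∑ i : Fin m, z i.succ * z i.succ with hSz
  set Su := ∑ i : Fin m, u i.succ * u i.succ with hSu
  have hSznn : 0 ≤ Sz := Finset.sum_nonneg fun i _ => mul_self_nonneg _
  have hSunn : 0 ≤ Su := Finset.sum_nonneg fun i _ => mul_self_nonneg _
  have hzlt : Sz < z 0 * z 0 := by linarith
  have hz0 : z 0 * z 0 > 0 := lt_of_le_of_lt hSznn hzlt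
  have hcs : (∑ i : Fin m, u i.succ * z i.succ) ^ 2 ≤ Su * Sz := by
    have := Finset.sum_mul_sq_le_sq_mul_sq Finset.univ (fun i : Fin m => u i.succ)
      (fun i : Fin m => z i.succ)
    simpa [hSu, hSz, sq] using this
  have huz : ∑ i : Fin m, u i.succ * z i.succ = u 0 * z 0 := by linarith
  have key : Su * (z 0 * z 0 - Sz) ≤ (z 0 * z 0) * (-(u 0 * u 0) + Su) := by
    have : (u 0 * z 0) ^ 2 ≤ Su * Sz := huz ▸ hcs
    nlinarith [this]
  constructor
  · nlinarith [key, hSunn, hzlt, hz0]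
  · intro h0
    have hSu0 : Su = 0 := by nlinarith [key, hSunn]
    have hui : ∀ i : Fin m, u i.succ = 0 := by
      intro i
      have := (Finset.sum_eq_zero_iff_of_nonneg (fun i _ => mul_self_nonneg (u i.succ))).mp hSu0 i (Finset.mem_univ i)
      nlinarith [this]
    have hu0 : u 0 = 0 := by
      have : u 0 * u 0 = 0 := by rw [hSu0] at h0; linarith
      nlinarith [this]
    funext i
    rcases Fin.eq_zero_or_eq_succ i with h | ⟨j, rfl⟩
    · rw [h]; exact hu0
    · exact hui j

def MinkSpace (n : ℕ) : Type := Fin n → ℝ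

instance (n : ℕ) : AddCommGroup (MinkSpace n) :=
  inferInstanceAs (AddCommGroup (Fin n → ℝ))
noncomputable instance (n : ℕ) : Module ℝ (MinkSpace n) :=
  inferInstanceAs (Module ℝ (Fin n → ℝ))
instance (n : ℕ) : FiniteDimensional ℝ (MinkSpace n) :=
  inferInstanceAs (Module.Finite ℝ (Fin n → ℝ))

/-- The identity as a linear equivalence from `MinkSpace n` to `Fin n → ℝ`. -/
noncomputable def minkEquiv (n : ℕ) : MinkSpace n ≃ₗ[ℝ] (Fin n → ℝ) where
  toFun v := v
  invFun v := v
  map_add' _ _ := rfl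
  map_smul' _ _ := rfl
  left_inv _ := rfl
  right_inv _ := rfl

theorem exists_eigenbasis_of_posdef (n : ℕ) (T : (Fin n → ℝ) →ₗ[ℝ] (Fin n → ℝ))
    (B : (Fin n → ℝ) → (Fin n → ℝ) → ℝ)
    (hsymm : ∀ u v, B u v = B v u)
    (haddl : ∀ u v w, B (u + v) w = B u w + B v w)
    (hsmull : ∀ (c : ℝ) u v, B (c • u) v = c * B u v)
    (hpos : ∀ u, 0 ≤ B u u)
    (hdef : ∀ u, B u u = 0 → u = 0)
    (hTs : ∀ u v, B (T u) v = B u (T v)) :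
    ∃ bas : Module.Basis (Fin n) ℝ (Fin n → ℝ), ∀ i, ∃ μ : ℝ, T (bas i) = μ • bas i := by
  let e := minkEquiv n
  let T' : MinkSpace n →ₗ[ℝ] MinkSpace n :=
    { toFun := fun v => e.symm (T (e v))
      map_add' := fun u v => by simp
      map_smul' := fun c v => by simp }
  let core : InnerProductSpace.Core ℝ (MinkSpace n) :=
    { inner := fun u v => B (e u) (e v)
      conj_inner_symm := fun u v => by simpa using hsymm (e v) (e u)
      re_inner_nonneg := fun u => by simpa using hpos (e u)
      definite := fun u h => by
        have := hdef (e u) (by simpa using h)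
        simpa using congrArg e.symm this
      add_left := fun u v w => by simpa using haddl (e u) (e v) (e w)
      smul_left := fun u v r => by simpa using hsmull r (e u) (e v) }
  letI : NormedAddCommGroup (MinkSpace n) := core.toNormedAddCommGroup
  letI : InnerProductSpace ℝ (MinkSpace n) := InnerProductSpace.ofCore core.toCore
  have hfr : Module.finrank ℝ (MinkSpace n) = n := by
    rw [(minkEquiv n).finrank_eq]
    exact Module.finrank_fin_fun ℝ
  have hT' : T'.IsSymmetric := by
    intro u v
    show B (e (T' u)) (e v) = B (e u) (e (T' v))
    have h1 : e (T' u) = T (e u) := e.apply_symm_apply _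
    have h2 : e (T' v) = T (e v) := e.apply_symm_apply _
    rw [h1, h2]; exact hTs (e u) (e v)
  let ob := hT'.eigenvectorBasis hfr
  refine ⟨ob.toBasis.map e, fun i => ⟨hT'.eigenvalues hfr i, ?_⟩⟩
  have h1 := (hT'.hasEigenvector_eigenvectorBasis hfr i).1
  rw [Module.End.mem_eigenspace_iff] at h1
  rw [Module.Basis.map_apply, OrthonormalBasis.coe_toBasis]
  calc T (e (ob i)) = e (T' (ob i)) := (e.apply_symm_apply _).symm
    _ = hT'.eigenvalues hfr i • e (ob i) := by rw [h1, map_smul]; norm_cast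


/-- Let `T` be a self-adjoint operator on Minkowski space `ℝⁿ`
(`n ≥ 2`).  If `T` has two linearly independent null eigenvectors `x` (with eigenvalue
`a`) and `y` (with eigenvalue `b`), then `ℝⁿ` has a basis of eigenvectors of `T`,
`a = b`, and the eigenspace of this common eigenvalue has dimension at least `2` and
contains a timelike vector. -/
theorem minkowski_two_null_eigenvectors
    (n : ℕ) (hn : 2 ≤ n) (T : (Fin n → ℝ) →ₗ[ℝ] (Fin n → ℝ))
    (hT : ∀ x y, mink n (T x) y = mink n x (T y))
    (x y : Fin n → ℝ) (a b : ℝ)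
    (hxy : LinearIndependent ℝ ![x, y])
    (hx0 : mink n x x = 0) (hy0 : mink n y y = 0)
    (hx : T x = a • x) (hy : T y = b • y) :
    (∃ bas : Module.Basis (Fin n) ℝ (Fin n → ℝ), ∀ i, ∃ μ : ℝ, T (bas i) = μ • bas i) ∧
    a = b ∧
    2 ≤ Module.finrank ℝ ↥(LinearMap.ker (T - a • LinearMap.id)) ∧
    ∃ z ∈ LinearMap.ker (T - a • LinearMap.id), mink n z z < 0 := by
  obtain ⟨m, rfl⟩ : ∃ m, n = m + 1 := ⟨n - 1, (Nat.succ_pred_eq_of_pos (by omega)).symm⟩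
  have hne : mink (m+1) x y ≠ 0 := mink_null_indep m x y hxy hx0 hy0
  have hab : a = b := by
    have h := hT x y
    rw [hx, hy, mink_smul_left, mink_smul_right] at h
    exact mul_right_cancel₀ hne h
  subst hab
  set s : ℝ := if mink (m+1) x y < 0 then 1 else -1 with hs
  set z : Fin (m+1) → ℝ := x + s • y with hzdef
  have hzz : mink (m+1) z z < 0 := by
    have h : mink (m+1) z z = 2 * s * mink (m+1) x y := by
      simp only [hzdef, mink_add_left, mink_add_right, mink_smul_left, mink_smul_right,
        hx0, hy0, mink_comm (m+1) y x]
      ring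
    rw [h, hs]
    rcases lt_or_gt_of_ne hne with hlt | hgt
    · rw [if_pos hlt]; nlinarith
    · rw [if_neg (not_lt.mpr (le_of_lt hgt))]; nlinarith
  have hTz : T z = a • z := by
    rw [hzdef, map_add, map_smul, hx, hy, smul_smul, smul_add, smul_smul, mul_comm]
  have hker : ∀ v : Fin (m+1) → ℝ, T v = a • v →
      v ∈ LinearMap.ker (T - a • LinearMap.id) := by
    intro v hv
    rw [LinearMap.mem_ker, LinearMap.sub_apply, LinearMap.smul_apply, LinearMap.id_apply,
      hv, sub_self]
  refine ⟨?_, rfl, ?_, z, hker z hTz, hzz⟩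
  · -- basis of eigenvectors
    set zz := mink (m+1) z z with hzzdef
    have hzzne : zz ≠ 0 := ne_of_lt hzz
    set B : (Fin (m+1) → ℝ) → (Fin (m+1) → ℝ) → ℝ :=
      fun u v => mink (m+1) u v - 2 * (mink (m+1) u z * mink (m+1) v z) / zz with hB
    have hBsymm : ∀ u v, B u v = B v u := by
      intro u v; simp only [hB, mink_comm (m+1) u v]; ring
    have hBaddl : ∀ u v w, B (u + v) w = B u w + B v w := by
      intro u v w; simp only [hB, mink_add_left]; ring
    have hBsmull : ∀ (c : ℝ) u v, B (c • u) v = c * B u v := by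
      intro c u v; simp only [hB, mink_smul_left]; ring
    have hBposdef : ∀ u, 0 ≤ B u u ∧ (B u u = 0 → u = 0) := by
      intro u
      set c : ℝ := mink (m+1) u z / zz with hc
      set w : Fin (m+1) → ℝ := u - c • z with hw
      have hwz : mink (m+1) w z = 0 := by
        rw [hw, mink_sub_left, mink_smul_left, hc, div_mul_cancel₀ _ hzzne, sub_self]
      obtain ⟨hwnn, hwdef⟩ := mink_orth_timelike m z w hzz hwz
      have hBu : B u u = mink (m+1) w w - (mink (m+1) u z)^2 / zz := by
        have hww : mink (m+1) w w
            = mink (m+1) u u - 2 * c * mink (m+1) u z + c * c * zz := by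
          simp only [hw, mink_sub_left, mink_sub_right, mink_smul_left, mink_smul_right,
            mink_comm (m+1) z u, ← hzzdef]
          ring
        rw [hB]
        rw [hww, hc]
        field_simp
        ring
      have huz2 : 0 ≤ -((mink (m+1) u z)^2 / zz) := by
        have h : (mink (m+1) u z)^2 / zz ≤ 0 :=
          div_nonpos_of_nonneg_of_nonpos (sq_nonneg _) (le_of_lt hzz)
        linarith
      constructor
      · rw [hBu]; linarith
      · intro h0
        rw [hBu] at h0
        have h1 : mink (m+1) w w = 0 := by linarith
        have h2 : (mink (m+1) u z)^2 / zz = 0 := by linarith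
        have h3 : mink (m+1) u z = 0 := by
          rcases div_eq_zero_iff.mp h2 with h | h
          · exact pow_eq_zero_iff (two_ne_zero) |>.mp h
          · exact absurd h hzzne
        have hc0 : c = 0 := by rw [hc, h3, zero_div]
        have hwu : w = u := by rw [hw, hc0, zero_smul, sub_zero]
        rw [← hwu]; exact hwdef h1
    have hTzB : ∀ u, mink (m+1) (T u) z = a * mink (m+1) u z := by
      intro u
      rw [hT u z, hTz, mink_smul_right]
    have hBTs : ∀ u v, B (T u) v = B u (T v) := by
      intro u v
      simp only [hB, hT u v, hTzB u, hTzB v]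
      ring
    exact exists_eigenbasis_of_posdef (m+1) T B hBsymm hBaddl hBsmull
      (fun u => (hBposdef u).1) (fun u => (hBposdef u).2) hBTs
  · -- finrank ≥ 2
    have hsub : Submodule.span ℝ (Set.range ![x, y]) ≤
        LinearMap.ker (T - a • LinearMap.id) := by
      rw [Submodule.span_le]
      rintro v ⟨i, rfl⟩
      fin_cases i
      · exact hker x hx
      · exact hker y hy
    have h2 : Module.finrank ℝ (Submodule.span ℝ (Set.range ![x, y])) = 2 := by
      rw [finrank_span_eq_card hxy]
      simp
    calc (2 : ℕ) = Module.finrank ℝ (Submodule.span ℝ (Set.range ![x, y])) := h2.symm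
      _ ≤ _ := Submodule.finrank_mono hsub
end

section
/- Let T be a self-adjoint linear operator on Minkowski space ℝ^n with n ≥ 3, and suppose ⟨Tx, x⟩ ≠ 0 for every nonzero null vector x. Then ℝ^n admits a basis of eigenvectors of T (T is diagonalizable over ℝ, with real spectrum). -/
noncomputable section
namespace MinkAux
open Matrix

variable {n : ℕ}

def Gm (n : ℕ) : Matrix (Fin n) (Fin n) ℝ :=
  Matrix.diagonal (fun i => if (i : ℕ) = 0 then (-1 : ℝ) else 1)

def bf (C : Matrix (Fin n) (Fin n) ℝ) (x y : Fin n → ℝ) : ℝ := x ⬝ᵥ (C *ᵥ y)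

def qf (C : Matrix (Fin n) (Fin n) ℝ) (x : Fin n → ℝ) : ℝ := bf C x x

lemma mink_eq (x y : Fin n → ℝ) : mink n x y = bf (Gm n) x y := by
  simp only [mink, bf, dotProduct, Gm, mulVec_diagonal]
  exact Finset.sum_congr rfl fun i _ => by ring

lemma Gm_transpose : (Gm n)ᵀ = Gm n := Matrix.diagonal_transpose _

lemma Gm_mul_Gm : Gm n * Gm n = 1 := by
  ext i j
  rw [Gm, diagonal_mul_diagonal]
  by_cases h : i = j
  · subst h
    by_cases h0 : (i : ℕ) = 0 <;> simp [Matrix.diagonal_apply_eq, h0, Matrix.one_apply]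
  · simp [Matrix.diagonal_apply_ne _ h, Matrix.one_apply, h]


lemma bf_symm {C : Matrix (Fin n) (Fin n) ℝ} (hC : Cᵀ = C) (x y : Fin n → ℝ) :
    bf C x y = bf C y x := by
  rw [bf, bf, Matrix.dotProduct_mulVec, ← Matrix.mulVec_transpose, hC, dotProduct_comm]

lemma bf_add_left (C : Matrix (Fin n) (Fin n) ℝ) (x y z : Fin n → ℝ) :
    bf C (x + y) z = bf C x z + bf C y z := add_dotProduct _ _ _

lemma bf_add_right (C : Matrix (Fin n) (Fin n) ℝ) (x y z : Fin n → ℝ) :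
    bf C x (y + z) = bf C x y + bf C x z := by
  rw [bf, Matrix.mulVec_add, dotProduct_add]; rfl

lemma bf_smul_left (C : Matrix (Fin n) (Fin n) ℝ) (c : ℝ) (x y : Fin n → ℝ) :
    bf C (c • x) y = c * bf C x y := smul_dotProduct _ _ _

lemma bf_smul_right (C : Matrix (Fin n) (Fin n) ℝ) (c : ℝ) (x y : Fin n → ℝ) :
    bf C x (c • y) = c * bf C x y := by
  rw [bf, Matrix.mulVec_smul, dotProduct_smul]; rfl


lemma qf_add {C : Matrix (Fin n) (Fin n) ℝ} (hC : Cᵀ = C) (x y : Fin n → ℝ) :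
    qf C (x + y) = qf C x + 2 * bf C x y + qf C y := by
  simp only [qf, bf_add_left, bf_add_right, bf_symm hC y x]
  ring

lemma qf_smul (C : Matrix (Fin n) (Fin n) ℝ) (c : ℝ) (x : Fin n → ℝ) :
    qf C (c • x) = c ^ 2 * qf C x := by
  simp only [qf, bf_smul_left, bf_smul_right]
  ring

lemma qf_eq_sum (C : Matrix (Fin n) (Fin n) ℝ) (x : Fin n → ℝ) :
    qf C x = ∑ i : Fin n, ∑ j : Fin n, x i * (C i j * x j) := by
  simp only [qf, bf, dotProduct, mulVec, Finset.mul_sum]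

lemma qf_continuous (C : Matrix (Fin n) (Fin n) ℝ) : Continuous (qf C) := by
  have : qf C = fun x : Fin n → ℝ => ∑ i : Fin n, ∑ j : Fin n, x i * (C i j * x j) := by
    funext x; exact qf_eq_sum C x
  rw [this]
  exact continuous_finset_sum _ fun i _ => continuous_finset_sum _ fun j _ =>
    (continuous_apply i).mul (continuous_const.mul (continuous_apply j))

lemma qf_Gm_eq (x : Fin n → ℝ) :
    qf (Gm n) x = ∑ i : Fin n, (if (i : ℕ) = 0 then (-1 : ℝ) else 1) * x i ^ 2 := by
  simp only [qf, bf, dotProduct, Gm, mulVec_diagonal]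
  exact Finset.sum_congr rfl fun i _ => by ring

lemma qf_sub_smul {A : Matrix (Fin n) (Fin n) ℝ} (μ : ℝ) (x : Fin n → ℝ) :
    qf (A - μ • Gm n) x = qf A x - μ * qf (Gm n) x := by
  simp only [qf, bf, Matrix.sub_mulVec, Matrix.smul_mulVec, dotProduct_sub,
    dotProduct_smul, smul_eq_mul]


lemma qf_Gm_pos_of_coord_zero (hn : 0 < n) (x : Fin n → ℝ)
    (h0 : x ⟨0, hn⟩ = 0) (hx : x ≠ 0) : 0 < qf (Gm n) x := by
  rw [qf_Gm_eq]
  have hne : ∃ i : Fin n, x i ≠ 0 := by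
    by_contra h
    push_neg at h
    exact hx (funext h)
  obtain ⟨i, hi⟩ := hne
  have hi0 : (i : ℕ) ≠ 0 := by
    intro h
    apply hi
    have : i = ⟨0, hn⟩ := Fin.ext h
    rw [this]; exact h0
  apply Finset.sum_pos' _ ⟨i, Finset.mem_univ i, ?_⟩
  · intro j _
    by_cases hj : (j : ℕ) = 0
    · have : j = ⟨0, hn⟩ := Fin.ext hj
      simp [hj, this, h0]
    · simp only [hj, if_false, one_mul]
      positivity
  · simp only [hi0, if_false, one_mul]
    positivity

lemma null_coord_ne_zero (hn : 0 < n) (x : Fin n → ℝ)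
    (hx : x ≠ 0) (hq : qf (Gm n) x = 0) : x ⟨0, hn⟩ ≠ 0 := by
  intro h0
  exact absurd hq (ne_of_gt (qf_Gm_pos_of_coord_zero hn x h0 hx))


lemma exists_quad_root_pos (a b c : ℝ) (ha : a < 0) (hc : 0 < c) :
    ∃ t : ℝ, 0 < t ∧ a * t ^ 2 + 2 * b * t + c = 0 := by
  set T : ℝ := (2 * |b| + c) / (-a) + 1 with hTdef
  have hna : 0 < -a := by linarith
  have hT1 : 1 ≤ T := by
    rw [hTdef]
    have : 0 ≤ (2 * |b| + c) / (-a) := by positivity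
    linarith
  have haT : a * T = -(2 * |b| + c) + a := by
    rw [hTdef, mul_add, mul_one, mul_div_assoc', div_neg, mul_div_cancel_left₀ _ (ne_of_lt ha)]
  have hfT : a * T ^ 2 + 2 * b * T + c < 0 := by
    have hb : b ≤ |b| := le_abs_self b
    have hb' : -|b| ≤ b := neg_abs_le b
    nlinarith [sq_nonneg T, sq_nonneg (T - 1)]
  have hcont : ContinuousOn (fun t : ℝ => a * t ^ 2 + 2 * b * t + c) (Set.Icc 0 T) := by
    apply Continuous.continuousOn
    continuity
  have h0T : (0 : ℝ) ≤ T := by linarith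
  have := intermediate_value_Icc' h0T hcont
  have hmem : (0 : ℝ) ∈ Set.Icc (a * T ^ 2 + 2 * b * T + c) (a * 0 ^ 2 + 2 * b * 0 + c) := by
    constructor
    · linarith
    · simp only [mul_zero]
      nlinarith
  obtain ⟨t, ht, hft⟩ := this hmem
  refine ⟨t, ?_, hft⟩
  rcases lt_or_eq_of_le ht.1 with h | h
  · exact h
  · exfalso
    rw [← h] at hft
    simp only [pow_two, mul_zero, zero_mul, mul_zero, add_zero, zero_add] at hft
    nlinarith

lemma exists_quad_root_neg (a b c : ℝ) (ha : a < 0) (hc : 0 < c) :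
    ∃ t : ℝ, t < 0 ∧ a * t ^ 2 + 2 * b * t + c = 0 := by
  obtain ⟨s, hs, hfs⟩ := exists_quad_root_pos a (-b) c ha hc
  exact ⟨-s, by linarith, by nlinarith⟩

lemma plane_lemma {A : Matrix (Fin n) (Fin n) ℝ} (hA : Aᵀ = A) (μ : ℝ)
    (hpos : ∀ z : Fin n → ℝ, z ≠ 0 → qf (Gm n) z = 0 → 0 < qf A z)
    (x y : Fin n → ℝ) (hx : 0 < qf (Gm n) x) (hy : qf (Gm n) y < 0)
    (hRx : qf A x - μ * qf (Gm n) x ≤ 0) (hRy : qf A y - μ * qf (Gm n) y ≤ 0) : False := by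
  set R : Matrix (Fin n) (Fin n) ℝ := A - μ • Gm n with hRdef
  have hRsymm : Rᵀ = R := by
    rw [hRdef, Matrix.transpose_sub, Matrix.transpose_smul, Gm_transpose, hA]
  have hqR : ∀ z, qf R z = qf A z - μ * qf (Gm n) z := fun z => qf_sub_smul μ z
  have hGmT : (Gm n)ᵀ = Gm n := Gm_transpose
  -- expansions
  have hGexp : ∀ t : ℝ, qf (Gm n) (x + t • y)
      = qf (Gm n) y * t ^ 2 + 2 * bf (Gm n) x y * t + qf (Gm n) x := by
    intro t
    rw [qf_add hGmT, bf_smul_right, qf_smul]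
    ring
  have hRexp : ∀ t : ℝ, qf R (x + t • y)
      = qf R x + 2 * t * bf R x y + t ^ 2 * qf R y := by
    intro t
    rw [qf_add hRsymm, bf_smul_right, qf_smul]
    ring
  have key : ∀ t : ℝ, t ≠ 0 →
      qf (Gm n) y * t ^ 2 + 2 * bf (Gm n) x y * t + qf (Gm n) x = 0 →
      0 < bf R x y * t := by
    intro t ht hroot
    have hz : x + t • y ≠ 0 := by
      intro h
      have hxy : x = (-t) • y := by
        rw [neg_smul]
        rw [eq_comm, neg_eq_iff_add_eq_zero]
        rw [add_comm]
        exact h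
      have : qf (Gm n) x = (-t) ^ 2 * qf (Gm n) y := by rw [hxy, qf_smul]
      nlinarith [sq_nonneg t]
    have hnull : qf (Gm n) (x + t • y) = 0 := by rw [hGexp t, hroot]
    have hRz : 0 < qf R (x + t • y) := by
      rw [hqR, hnull]
      have := hpos _ hz hnull
      linarith
    rw [hRexp t] at hRz
    have h1 : qf R x ≤ 0 := by rw [hqR]; exact hRx
    have h2 : qf R y ≤ 0 := by rw [hqR]; exact hRy
    nlinarith [sq_nonneg t]
  obtain ⟨t2, ht2, hroot2⟩ := exists_quad_root_pos (qf (Gm n) y) (bf (Gm n) x y) (qf (Gm n) x) hy hx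
  obtain ⟨t1, ht1, hroot1⟩ := exists_quad_root_neg (qf (Gm n) y) (bf (Gm n) x y) (qf (Gm n) x) hy hx
  have k2 := key t2 (ne_of_gt ht2) (by nlinarith)
  have k1 := key t1 (ne_of_lt ht1) (by nlinarith)
  nlinarith


lemma qf_triple {C : Matrix (Fin n) (Fin n) ℝ} (hC : Cᵀ = C)
    (u v z : Fin n → ℝ) (a b c : ℝ) :
    qf C (a • u + b • v + c • z) =
      a ^ 2 * qf C u + b ^ 2 * qf C v + c ^ 2 * qf C z
      + 2 * (a * b) * bf C u v + 2 * (a * c) * bf C u z + 2 * (b * c) * bf C v z := by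
  rw [qf_add hC, qf_add hC, bf_add_left, qf_smul, qf_smul, qf_smul,
    bf_smul_left, bf_smul_left, bf_smul_left, bf_smul_right, bf_smul_right, bf_smul_right]
  ring

lemma no_null_path {A : Matrix (Fin n) (Fin n) ℝ}
    (hne : ∀ z : Fin n → ℝ, z ≠ 0 → qf (Gm n) z = 0 → qf A z ≠ 0)
    (c : ℝ → Fin n → ℝ) (hc : Continuous c)
    (hcnull : ∀ t ∈ Set.Icc (0:ℝ) 1, c t ≠ 0 ∧ qf (Gm n) (c t) = 0)
    (h0 : 0 < qf A (c 0)) (h1 : qf A (c 1) < 0) : False := by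
  have hg : ContinuousOn (fun t => qf A (c t)) (Set.Icc (0:ℝ) 1) :=
    ((qf_continuous A).comp hc).continuousOn
  have := intermediate_value_Icc' (by norm_num : (0:ℝ) ≤ 1) hg
  obtain ⟨t, ht, hft⟩ := this ⟨le_of_lt h1, le_of_lt h0⟩
  exact hne (c t) (hcnull t ht).1 (hcnull t ht).2 hft


lemma sign_aux (hn : 3 ≤ n) {A : Matrix (Fin n) (Fin n) ℝ} (hA : Aᵀ = A)
    (hne : ∀ z : Fin n → ℝ, z ≠ 0 → qf (Gm n) z = 0 → qf A z ≠ 0)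
    (x y : Fin n → ℝ) (hx : x ≠ 0) (hxq : qf (Gm n) x = 0)
    (hy : y ≠ 0) (hyq : qf (Gm n) y = 0)
    (hB : bf (Gm n) x y ≤ 0)
    (hfx : 0 < qf A x) (hfy : qf A y < 0) : False := by
  have hn0 : 0 < n := by omega
  have hGmT : (Gm n)ᵀ = Gm n := Gm_transpose
  have hxx : bf (Gm n) x x = 0 := hxq
  have hyy : bf (Gm n) y y = 0 := hyq
  rcases eq_or_lt_of_le hB with hB0 | hBneg
  · -- case bf Gm x y = 0
    by_cases hdep : ∃ cc : ℝ, y = cc • x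
    · obtain ⟨cc, rfl⟩ := hdep
      have hcc : cc ≠ 0 := by
        intro h
        rw [h, zero_smul] at hy
        exact hy rfl
      rw [qf_smul] at hfy
      nlinarith [sq_nonneg cc]
    · apply no_null_path hne (fun t => (1 - t) • x + t • y)
      · exact (((continuous_const.sub continuous_id).smul continuous_const).add
          (continuous_id.smul continuous_const))
      · intro t _
        constructor
        · intro h
          rcases eq_or_ne t 0 with rfl | ht0
          · simp only [sub_zero, one_smul, zero_smul, add_zero] at h
            exact hx h
          · apply hdep
            have h2 : t • y = -((1 - t) • x) := eq_neg_of_add_eq_zero_right h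
            refine ⟨t⁻¹ * -(1 - t), ?_⟩
            rw [mul_smul, neg_smul, ← h2, smul_smul, inv_mul_cancel₀ ht0, one_smul]
        · rw [qf_add hGmT, qf_smul, qf_smul, bf_smul_left, bf_smul_right, hxq, hyq, ← hB0]
          ring
      · have e0 : (1 - (0:ℝ)) • x + (0:ℝ) • y = x := by
          simp only [sub_zero, one_smul, zero_smul, add_zero]
        show 0 < qf A ((1 - (0:ℝ)) • x + (0:ℝ) • y)
        rw [e0]; exact hfx
      · have e1 : (1 - (1:ℝ)) • x + (1:ℝ) • y = y := by
          simp only [sub_self, zero_smul, one_smul, zero_add]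
        show qf A ((1 - (1:ℝ)) • x + (1:ℝ) • y) < 0
        rw [e1]; exact hfy
  · -- case bf Gm x y < 0
    have hker : ∃ w0 : Fin n → ℝ, w0 ≠ 0 ∧ bf (Gm n) w0 x = 0 ∧ bf (Gm n) w0 y = 0 := by
      let L : (Fin n → ℝ) →ₗ[ℝ] ℝ × ℝ :=
        { toFun := fun w => (bf (Gm n) w x, bf (Gm n) w y)
          map_add' := fun a b => by simp [bf_add_left, Prod.ext_iff]
          map_smul' := fun cc a => by
            simp [bf_smul_left, Prod.ext_iff, smul_eq_mul] }
      have hlt : Module.finrank ℝ (ℝ × ℝ) < Module.finrank ℝ (Fin n → ℝ) := by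
        simp only [Module.finrank_prod, Module.finrank_self, Module.finrank_pi, Fintype.card_fin]
        omega
      have := LinearMap.ker_ne_bot_of_finrank_lt (f := L) hlt
      rw [Submodule.ne_bot_iff] at this
      obtain ⟨w0, hw0mem, hw0ne⟩ := this
      have hL : L w0 = 0 := hw0mem
      rw [Prod.ext_iff] at hL
      exact ⟨w0, hw0ne, hL.1, hL.2⟩
    obtain ⟨w0, hw0ne, hw0x, hw0y⟩ := hker
    have hx0 : x ⟨0, hn0⟩ ≠ 0 := null_coord_ne_zero hn0 x hx hxq
    have hqw0 : 0 < qf (Gm n) w0 := by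
      by_contra hle
      push_neg at hle
      set s : ℝ := -(w0 ⟨0, hn0⟩) / (x ⟨0, hn0⟩) with hsdef
      have hv0 : (s • x + w0) ⟨0, hn0⟩ = 0 := by
        simp only [Pi.add_apply, Pi.smul_apply, smul_eq_mul, hsdef]
        field_simp
        ring
      have hvne : s • x + w0 ≠ 0 := by
        intro h
        have hw0eq : w0 = -(s • x) := eq_neg_of_add_eq_zero_right h
        rw [← neg_smul] at hw0eq
        rw [hw0eq, bf_smul_left] at hw0y
        have hs0 : -s = 0 := by
          rcases mul_eq_zero.mp hw0y with h' | h'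
          · exact h'
          · exact absurd h' (ne_of_lt hBneg)
        rw [hw0eq, hs0, zero_smul] at hw0ne
        exact hw0ne rfl
      have hpos := qf_Gm_pos_of_coord_zero hn0 _ hv0 hvne
      have hxw0 : bf (Gm n) x w0 = 0 := by rw [bf_symm hGmT]; exact hw0x
      have hqv : qf (Gm n) (s • x + w0) = qf (Gm n) w0 := by
        have := qf_add hGmT (s • x) w0
        rw [qf_smul, hxq, bf_smul_left, hxw0] at this
        rw [this]; ring
      rw [hqv] at hpos
      linarith
    set B1 := bf (Gm n) x y with hB1def
    set r : ℝ := (-2 * B1) / qf (Gm n) w0 with hrdef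
    have hrpos : 0 < r := by
      apply div_pos _ hqw0
      simp only [hB1def]
      linarith
    set w : Fin n → ℝ := Real.sqrt r • w0 with hwdef
    have hqw : qf (Gm n) w = -2 * B1 := by
      rw [hwdef, qf_smul, Real.sq_sqrt (le_of_lt hrpos), hrdef]
      field_simp
    have hwx : bf (Gm n) w x = 0 := by rw [hwdef, bf_smul_left, hw0x, mul_zero]
    have hwy : bf (Gm n) w y = 0 := by rw [hwdef, bf_smul_left, hw0y, mul_zero]
    have hxw : bf (Gm n) x w = 0 := by rw [bf_symm hGmT]; exact hwx
    have hyw : bf (Gm n) y w = 0 := by rw [bf_symm hGmT]; exact hwy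
    have hww : qf (Gm n) w = -2 * B1 := hqw
    have hwne : w ≠ 0 := by
      intro h
      rw [h] at hqw
      rw [qf, bf, Matrix.mulVec_zero, dotProduct_zero] at hqw
      simp only [hB1def] at hqw
      linarith
    have hindep : ∀ a b cc : ℝ, a • x + b • y + cc • w = 0 → a = 0 ∧ b = 0 ∧ cc = 0 := by
      intro a b cc h
      have hbf0y : bf (Gm n) (0 : Fin n → ℝ) y = 0 := zero_dotProduct _
      have hbf0x : bf (Gm n) (0 : Fin n → ℝ) x = 0 := zero_dotProduct _
      have hyx : bf (Gm n) y x = B1 := by rw [bf_symm hGmT]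
      have ha : a = 0 := by
        have h1 := congrArg (fun z => bf (Gm n) z y) h
        simp only [bf_add_left, bf_smul_left] at h1
        rw [hyy, hwy, hbf0y, ← hB1def] at h1
        have h2 : a * B1 = 0 := by linarith
        rcases mul_eq_zero.mp h2 with h' | h'
        · exact h'
        · exact absurd h' (ne_of_lt hBneg)
      have hb : b = 0 := by
        have h1 := congrArg (fun z => bf (Gm n) z x) h
        simp only [bf_add_left, bf_smul_left] at h1
        rw [hxx, hwx, hbf0x, hyx] at h1
        have h2 : b * B1 = 0 := by linarith
        rcases mul_eq_zero.mp h2 with h' | h'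
        · exact h'
        · exact absurd h' (ne_of_lt hBneg)
      refine ⟨ha, hb, ?_⟩
      rw [ha, hb, zero_smul, zero_smul, zero_add, zero_add] at h
      rcases smul_eq_zero.mp h with h' | h'
      · exact h'
      · exact absurd h' hwne
    apply no_null_path hne (fun t => ((1-t)^2) • x + (t^2) • y + (t*(1-t)) • w)
    · exact ((((continuous_const.sub continuous_id).pow 2).smul continuous_const).add
        ((continuous_id.pow 2).smul continuous_const)).add
        ((continuous_id.mul (continuous_const.sub continuous_id)).smul continuous_const)
    · intro t _
      constructor
      · intro h
        obtain ⟨h1, h2, _⟩ := hindep _ _ _ h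
        have ht1 : t = 1 := by nlinarith [sq_nonneg (1-t)]
        have ht0 : t = 0 := by nlinarith [sq_nonneg t]
        rw [ht0] at ht1
        norm_num at ht1
      · rw [qf_triple hGmT, hxq, hyq, hww, ← hB1def, hxw, hyw]
        ring
    · have e0 : ((1-(0:ℝ))^2) • x + (((0:ℝ))^2) • y + ((0:ℝ)*(1-(0:ℝ))) • w = x := by
        norm_num
      show 0 < qf A (((1-(0:ℝ))^2) • x + (((0:ℝ))^2) • y + ((0:ℝ)*(1-(0:ℝ))) • w)
      rw [e0]; exact hfx
    · have e1 : ((1-(1:ℝ))^2) • x + (((1:ℝ))^2) • y + ((1:ℝ)*(1-(1:ℝ))) • w = y := by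
        norm_num
      show qf A (((1-(1:ℝ))^2) • x + (((1:ℝ))^2) • y + ((1:ℝ)*(1-(1:ℝ))) • w) < 0
      rw [e1]; exact hfy

/-- Sign constancy on the null cone. -/
lemma sign_const (hn : 3 ≤ n) {A : Matrix (Fin n) (Fin n) ℝ} (hA : Aᵀ = A)
    (hne : ∀ z : Fin n → ℝ, z ≠ 0 → qf (Gm n) z = 0 → qf A z ≠ 0)
    (x y : Fin n → ℝ) (hx : x ≠ 0) (hxq : qf (Gm n) x = 0)
    (hy : y ≠ 0) (hyq : qf (Gm n) y = 0)
    (hfx : 0 < qf A x) : 0 < qf A y := by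
  rcases lt_trichotomy (qf A y) 0 with hfy | hfy | hfy
  · exfalso
    by_cases hB : bf (Gm n) x y ≤ 0
    · exact sign_aux hn hA hne x y hx hxq hy hyq hB hfx hfy
    · push_neg at hB
      have hyne' : (-1 : ℝ) • y ≠ 0 := by
        simp only [neg_smul, one_smul, ne_eq, neg_eq_zero]
        exact hy
      have hyq' : qf (Gm n) ((-1 : ℝ) • y) = 0 := by rw [qf_smul, hyq, mul_zero]
      have hB' : bf (Gm n) x ((-1 : ℝ) • y) ≤ 0 := by
        rw [bf_smul_right]
        linarith
      have hfy' : qf A ((-1 : ℝ) • y) < 0 := by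
        rw [qf_smul]
        nlinarith
      exact sign_aux hn hA hne x _ hx hxq hyne' hyq' hB' hfx hfy'
  · exact absurd hfy (hne y hy hyq)
  · exact hfy


lemma qf_neg (C : Matrix (Fin n) (Fin n) ℝ) (x : Fin n → ℝ) : qf (-C) x = - qf C x := by
  simp only [qf, bf, Matrix.neg_mulVec, dotProduct_neg]

/-- Ray lemma: for `lam` small enough, `qf A - lam * qf C > 0` on the part of the
unit sphere where `qf C ≥ 0`. -/
lemma ray_lemma (C A : Matrix (Fin n) (Fin n) ℝ)
    (hpos : ∀ x : Fin n → ℝ, x ≠ 0 → qf C x = 0 → 0 < qf A x) :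
    ∃ lam0 : ℝ, lam0 < 0 ∧ ∀ lam ≤ lam0, ∀ x : Fin n → ℝ, ‖x‖ = 1 → 0 ≤ qf C x →
      0 < qf A x - lam * qf C x := by
  classical
  set D : Set (Fin n → ℝ) :=
    Metric.sphere 0 1 ∩ ({x | 0 ≤ qf C x} ∩ {x | qf A x ≤ 0}) with hDdef
  have hDcomp : IsCompact D :=
    (isCompact_sphere 0 1).inter_right
      ((isClosed_le continuous_const (qf_continuous C)).inter
        (isClosed_le (qf_continuous A) continuous_const))
  rcases D.eq_empty_or_nonempty with hD | hDne
  · refine ⟨-1, by norm_num, ?_⟩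
    intro lam hlam x hx hCx
    have hAx : 0 < qf A x := by
      by_contra h
      push_neg at h
      have : x ∈ D := by
        rw [hDdef]
        exact ⟨by simpa [mem_sphere_zero_iff_norm] using hx, hCx, h⟩
      rw [hD] at this
      exact this
    nlinarith
  · obtain ⟨x1, hx1D, hmin1⟩ := hDcomp.exists_isMinOn hDne (qf_continuous C).continuousOn
    obtain ⟨x2, hx2D, hmin2⟩ := hDcomp.exists_isMinOn hDne (qf_continuous A).continuousOn
    have hx1K : ‖x1‖ = 1 := by
      have := hx1D.1
      rwa [mem_sphere_zero_iff_norm] at this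
    have hx1ne : x1 ≠ 0 := by
      intro h
      rw [h, norm_zero] at hx1K
      norm_num at hx1K
    set δ : ℝ := qf C x1 with hδdef
    have hCx1 : 0 ≤ qf C x1 := hx1D.2.1
    have hAx1 : qf A x1 ≤ 0 := hx1D.2.2
    have hδpos : 0 < δ := by
      rcases lt_or_eq_of_le hCx1 with h | h
      · exact h
      · exfalso
        have := hpos x1 hx1ne h.symm
        linarith
    set m : ℝ := qf A x2 with hmdef
    have hm0 : m ≤ 0 := hx2D.2.2
    have hlam0neg : (m - 1)/δ < 0 := div_neg_of_neg_of_pos (by linarith) hδpos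
    refine ⟨(m - 1)/δ, hlam0neg, ?_⟩
    intro lam hlam x hx hCx
    by_cases hAx : qf A x ≤ 0
    · have hxD : x ∈ D := ⟨by simpa [mem_sphere_zero_iff_norm] using hx, hCx, hAx⟩
      have h1 : δ ≤ qf C x := hmin1 hxD
      have h2 : m ≤ qf A x := hmin2 hxD
      have hlamneg : lam < 0 := lt_of_le_of_lt hlam hlam0neg
      have hkey : (-lam) * qf C x ≥ (-(m-1)/δ) * δ := by
        have h3 : -(m-1)/δ ≤ -lam := by
          rw [neg_div]
          linarith
        have h4 : 0 < -(m-1)/δ := div_pos (by linarith) hδpos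
        nlinarith
      rw [div_mul_cancel₀] at hkey
      · nlinarith
      · exact ne_of_gt hδpos
    · push_neg at hAx
      have hlamneg : lam < 0 := lt_of_le_of_lt hlam hlam0neg
      nlinarith


lemma qf_Gm_single (hn : 0 < n) (j : Fin n) (c : ℝ) :
    qf (Gm n) (Pi.single j c) = (if (j : ℕ) = 0 then (-1:ℝ) else 1) * c ^ 2 := by
  rw [qf_Gm_eq]
  rw [Finset.sum_eq_single_of_mem j (Finset.mem_univ j)]
  · rw [Pi.single_eq_same]
  · intro i _ hij
    rw [Pi.single_eq_of_ne hij]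
    ring

lemma exists_lambda (hn : 3 ≤ n) {A : Matrix (Fin n) (Fin n) ℝ} (hA : Aᵀ = A)
    (hpos : ∀ x : Fin n → ℝ, x ≠ 0 → qf (Gm n) x = 0 → 0 < qf A x) :
    ∃ lam : ℝ, ∀ x : Fin n → ℝ, x ≠ 0 → 0 < qf A x - lam * qf (Gm n) x := by
  have hn0 : 0 < n := by omega
  have hn1 : 1 < n := by omega
  suffices hs : ∃ lam : ℝ, ∀ x : Fin n → ℝ, ‖x‖ = 1 → 0 < qf A x - lam * qf (Gm n) x by
    obtain ⟨lam, h⟩ := hs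
    refine ⟨lam, fun x hx => ?_⟩
    set u : Fin n → ℝ := ‖x‖⁻¹ • x with hudef
    have hu : ‖u‖ = 1 := norm_smul_inv_norm hx
    have hx2 := h u hu
    have hnx : 0 < ‖x‖ := norm_pos_iff.mpr hx
    have e1 : qf A u = ‖x‖⁻¹ ^ 2 * qf A x := by rw [hudef, qf_smul]
    have e2 : qf (Gm n) u = ‖x‖⁻¹ ^ 2 * qf (Gm n) x := by rw [hudef, qf_smul]
    rw [e1, e2] at hx2
    have hone : ‖x‖⁻¹ ^ 2 * ‖x‖ ^ 2 = 1 := by field_simp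
    nlinarith [mul_pos hx2 (pow_pos hnx 2)]
  obtain ⟨lam0, hlam0neg, H1⟩ := ray_lemma (Gm n) A hpos
  obtain ⟨lam0', hlam0'neg, H2⟩ := ray_lemma (-(Gm n)) A (by
    intro x hx h
    rw [qf_neg, neg_eq_zero] at h
    exact hpos x hx h)
  by_contra hcon
  push_neg at hcon
  -- hcon : ∀ lam, ∃ x, ‖x‖ = 1 ∧ qf A x - lam * qf (Gm n) x ≤ 0
  set S2 : Set ℝ :=
    {lam | ∃ y : Fin n → ℝ, ‖y‖ = 1 ∧ qf (Gm n) y ≤ 0 ∧ qf A y - lam * qf (Gm n) y ≤ 0}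
    with hS2def
  have key : ∀ lam : ℝ,
      (∃ x : Fin n → ℝ, ‖x‖ = 1 ∧ 0 ≤ qf (Gm n) x ∧ qf A x - lam * qf (Gm n) x ≤ 0) →
      lam ∈ S2 → False := by
    rintro lam ⟨x, hxn, hxG, hxR⟩ ⟨y, hyn, hyG, hyR⟩
    have hxne : x ≠ 0 := fun h => by simp [h] at hxn
    have hyne : y ≠ 0 := fun h => by simp [h] at hyn
    have hGx : 0 < qf (Gm n) x := by
      rcases lt_or_eq_of_le hxG with h | h
      · exact h
      · exfalso
        have := hpos x hxne h.symm
        rw [← h] at hxR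
        nlinarith
    have hGy : qf (Gm n) y < 0 := by
      rcases lt_or_eq_of_le hyG with h | h
      · exact h
      · exfalso
        have := hpos y hyne h
        rw [h] at hyR
        nlinarith
    exact plane_lemma hA lam hpos x y hGx hGy hxR hyR
  have hS2ne : S2.Nonempty := by
    obtain ⟨x, hxn, hxR⟩ := hcon lam0
    rcases le_or_gt 0 (qf (Gm n) x) with h | h
    · exact absurd (H1 lam0 le_rfl x hxn h) (by linarith)
    · exact ⟨lam0, x, hxn, le_of_lt h, hxR⟩
  have hbdd : BddAbove S2 := by
    refine ⟨-lam0', ?_⟩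
    rintro lam ⟨y, hyn, hyG, hyR⟩
    by_contra hgt
    push_neg at hgt
    have h2 := H2 (-lam) (by linarith) y hyn (by rw [qf_neg]; linarith)
    rw [qf_neg] at h2
    nlinarith
  set a : ℝ := sSup S2 with hadef
  -- bound on |qf Gm| over the sphere
  have hCb : ∃ Cb : ℝ, 0 < Cb ∧ ∀ x : Fin n → ℝ, ‖x‖ = 1 → |qf (Gm n) x| ≤ Cb := by
    have hKcomp : IsCompact (Metric.sphere (0 : Fin n → ℝ) 1) := isCompact_sphere 0 1
    have hKne : (Metric.sphere (0 : Fin n → ℝ) 1).Nonempty := by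
      refine ⟨Pi.single ⟨1, hn1⟩ (1:ℝ), ?_⟩
      rw [mem_sphere_zero_iff_norm, Pi.norm_single, norm_one]
    obtain ⟨z0, _, hz0⟩ := hKcomp.exists_isMaxOn hKne
      ((qf_continuous (Gm n)).abs).continuousOn
    refine ⟨max |qf (Gm n) z0| 1, lt_of_lt_of_le one_pos (le_max_right _ _), ?_⟩
    intro x hx
    have := hz0 (by rwa [mem_sphere_zero_iff_norm])
    exact le_trans this (le_max_left _ _)
  obtain ⟨Cb, hCbpos, hCble⟩ := hCb
  -- a ∈ S1
  have amem1 : ∃ x : Fin n → ℝ, ‖x‖ = 1 ∧ 0 ≤ qf (Gm n) x ∧ qf A x - a * qf (Gm n) x ≤ 0 := by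
    set Kp : Set (Fin n → ℝ) := Metric.sphere 0 1 ∩ {x | 0 ≤ qf (Gm n) x} with hKpdef
    have hKpcomp : IsCompact Kp :=
      (isCompact_sphere 0 1).inter_right (isClosed_le continuous_const (qf_continuous (Gm n)))
    have hKpne : Kp.Nonempty := by
      refine ⟨Pi.single ⟨1, hn1⟩ (1:ℝ), ?_, ?_⟩
      · rw [mem_sphere_zero_iff_norm, Pi.norm_single, norm_one]
      · show (0:ℝ) ≤ qf (Gm n) (Pi.single ⟨1, hn1⟩ (1:ℝ))
        rw [qf_Gm_single hn0]
        norm_num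
    have hRcont : Continuous (fun x : Fin n → ℝ => qf A x - a * qf (Gm n) x) :=
      (qf_continuous A).sub (continuous_const.mul (qf_continuous (Gm n)))
    obtain ⟨x0, hx0K, hmin⟩ := hKpcomp.exists_isMinOn hKpne hRcont.continuousOn
    have hx0n : ‖x0‖ = 1 := by
      have := hx0K.1
      rwa [mem_sphere_zero_iff_norm] at this
    refine ⟨x0, hx0n, hx0K.2, ?_⟩
    by_contra hv
    push_neg at hv
    set v : ℝ := qf A x0 - a * qf (Gm n) x0 with hvdef
    set ε : ℝ := v / (2 * Cb) with hεdef
    have hεpos : 0 < ε := by positivity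
    have hnotmem : a + ε ∉ S2 := by
      intro hmem
      have := le_csSup hbdd hmem
      linarith
    obtain ⟨x, hxn, hxR⟩ := hcon (a + ε)
    rcases le_or_gt (qf (Gm n) x) 0 with h | h
    · exact hnotmem ⟨x, hxn, h, hxR⟩
    · have hxKp : x ∈ Kp := ⟨by rwa [mem_sphere_zero_iff_norm], le_of_lt h⟩
      have h1 : v ≤ qf A x - a * qf (Gm n) x := hmin hxKp
      have h2 : qf (Gm n) x ≤ Cb := le_trans (le_abs_self _) (hCble x hxn)
      have hεC : ε * Cb = v / 2 := by
        rw [hεdef]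
        field_simp
      nlinarith
  -- a ∈ S2
  have amem2 : a ∈ S2 := by
    set Km : Set (Fin n → ℝ) := Metric.sphere 0 1 ∩ {x | qf (Gm n) x ≤ 0} with hKmdef
    have hKmcomp : IsCompact Km :=
      (isCompact_sphere 0 1).inter_right (isClosed_le (qf_continuous (Gm n)) continuous_const)
    have hKmne : Km.Nonempty := by
      refine ⟨Pi.single ⟨0, hn0⟩ (1:ℝ), ?_, ?_⟩
      · rw [mem_sphere_zero_iff_norm, Pi.norm_single, norm_one]
      · show qf (Gm n) (Pi.single ⟨0, hn0⟩ (1:ℝ)) ≤ 0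
        rw [qf_Gm_single hn0]
        norm_num
    have hRcont : Continuous (fun x : Fin n → ℝ => qf A x - a * qf (Gm n) x) :=
      (qf_continuous A).sub (continuous_const.mul (qf_continuous (Gm n)))
    obtain ⟨y0, hy0K, hmin⟩ := hKmcomp.exists_isMinOn hKmne hRcont.continuousOn
    have hy0n : ‖y0‖ = 1 := by
      have := hy0K.1
      rwa [mem_sphere_zero_iff_norm] at this
    refine ⟨y0, hy0n, hy0K.2, ?_⟩
    by_contra hv
    push_neg at hv
    set v : ℝ := qf A y0 - a * qf (Gm n) y0 with hvdef
    set ε : ℝ := v / (2 * Cb) with hεdef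
    have hεpos : 0 < ε := by positivity
    obtain ⟨μ, hμmem, hμgt⟩ := exists_lt_of_lt_csSup hS2ne (by linarith : a - ε < a)
    have hμle : μ ≤ a := le_csSup hbdd hμmem
    obtain ⟨y, hyn, hyG, hyR⟩ := hμmem
    have hyKm : y ∈ Km := ⟨by rwa [mem_sphere_zero_iff_norm], hyG⟩
    have h1 : v ≤ qf A y - a * qf (Gm n) y := hmin hyKm
    have h2 : -qf (Gm n) y ≤ Cb := le_trans (neg_le_abs _) (hCble y hyn)
    have hεC : ε * Cb = v / 2 := by
      rw [hεdef]
      field_simp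
    nlinarith
  exact key a amem1 amem2


open scoped MatrixOrder in
lemma eig_of_posdef {P : Matrix (Fin n) (Fin n) ℝ} (hP : P.PosDef) :
    ∃ b : Module.Basis (Fin n) ℝ (Fin n → ℝ), ∀ i, ∃ μ : ℝ, (Gm n * P) *ᵥ (b i) = μ • (b i) := by
  classical
  set S : Matrix (Fin n) (Fin n) ℝ := CFC.sqrt P with hSdef
  have hPSS : S * S = P := CFC.sqrt_mul_sqrt_self P (Matrix.nonneg_iff_posSemidef.mpr hP.posSemidef)
  have hSherm : S.IsHermitian := (Matrix.nonneg_iff_posSemidef.mp (CFC.sqrt_nonneg P)).1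
  have hSsym : Sᵀ = S := by
    rw [← Matrix.conjTranspose_eq_transpose_of_trivial]
    exact hSherm
  have hdet : IsUnit S.det := by
    rw [isUnit_iff_ne_zero]
    intro h
    have : P.det = 0 := by rw [← hPSS, Matrix.det_mul, h, mul_zero]
    exact absurd this (ne_of_gt hP.det_pos)
  have hinv : Invertible S := S.invertibleOfIsUnitDet hdet
  set B : Matrix (Fin n) (Fin n) ℝ := S * Gm n * S with hBdef
  have hB : B.IsHermitian := by
    rw [Matrix.IsHermitian, Matrix.conjTranspose_eq_transpose_of_trivial, hBdef,
      Matrix.transpose_mul, Matrix.transpose_mul, Gm_transpose, hSsym, Matrix.mul_assoc]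
  set u := hB.eigenvectorBasis with hudef
  set eqS := S.toLinearEquiv' hinv with heqSdef
  refine ⟨(u.toBasis.map (WithLp.linearEquiv 2 ℝ (Fin n → ℝ))).map eqS.symm,
    fun i => ⟨hB.eigenvalues i, ?_⟩⟩
  set v : Fin n → ℝ := ⇑(u i) with hvdef
  have hbi : (u.toBasis.map (WithLp.linearEquiv 2 ℝ (Fin n → ℝ))).map eqS.symm i
      = (⅟S) *ᵥ v := by
    rw [Module.Basis.map_apply, Module.Basis.map_apply]
    have h1 : (WithLp.linearEquiv 2 ℝ (Fin n → ℝ)) (u.toBasis i) = v := by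
      rw [OrthonormalBasis.coe_toBasis]
      rfl
    rw [h1]
    have h2 := Matrix.toLinearEquiv'_symm_apply S hinv
    calc eqS.symm v = (↑(eqS.symm) : Module.End ℝ (Fin n → ℝ)) v := rfl
      _ = Matrix.toLin' (⅟S) v := by rw [heqSdef, h2]
      _ = (⅟S) *ᵥ v := Matrix.toLin'_apply _ _
  rw [hbi]
  have hBv : B *ᵥ v = hB.eigenvalues i • v := by
    rw [hvdef, hudef]
    exact hB.mulVec_eigenvectorBasis i
  have hmat : (Gm n * P) * ⅟S = ⅟S * B := by
    rw [hBdef, ← hPSS]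
    calc Gm n * (S * S) * ⅟S = Gm n * (S * (S * ⅟S)) := by
          rw [Matrix.mul_assoc, Matrix.mul_assoc]
      _ = Gm n * S := by rw [mul_invOf_self, Matrix.mul_one]
      _ = (⅟S * S) * (Gm n * S) := by rw [invOf_mul_self, Matrix.one_mul]
      _ = ⅟S * (S * Gm n * S) := by rw [Matrix.mul_assoc, Matrix.mul_assoc]
  calc (Gm n * P) *ᵥ ((⅟S) *ᵥ v) = ((Gm n * P) * ⅟S) *ᵥ v := Matrix.mulVec_mulVec _ _ _
    _ = (⅟S * B) *ᵥ v := by rw [hmat]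
    _ = ⅟S *ᵥ (B *ᵥ v) := (Matrix.mulVec_mulVec _ _ _).symm
    _ = ⅟S *ᵥ (hB.eigenvalues i • v) := by rw [hBv]
    _ = hB.eigenvalues i • (⅟S *ᵥ v) := Matrix.mulVec_smul _ _ _

lemma main_pos (hn : 3 ≤ n) {A : Matrix (Fin n) (Fin n) ℝ} (hA : Aᵀ = A)
    (hpos : ∀ x : Fin n → ℝ, x ≠ 0 → qf (Gm n) x = 0 → 0 < qf A x) :
    ∃ b : Module.Basis (Fin n) ℝ (Fin n → ℝ), ∀ i, ∃ μ : ℝ, (Gm n * A) *ᵥ (b i) = μ • (b i) := by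
  obtain ⟨lam, hlam⟩ := exists_lambda hn hA hpos
  have hPD : (A - lam • Gm n).PosDef := by
    rw [Matrix.posDef_iff_dotProduct_mulVec]
    constructor
    · rw [Matrix.IsHermitian, Matrix.conjTranspose_eq_transpose_of_trivial,
        Matrix.transpose_sub, Matrix.transpose_smul, Gm_transpose, hA]
    · intro x hx
      have := hlam x hx
      have hstar : star x = x := by
        funext i
        simp [star_trivial]
      rw [hstar]
      have : qf (A - lam • Gm n) x = qf A x - lam * qf (Gm n) x := qf_sub_smul lam x
      rw [qf, bf] at this
      rw [this]
      exact hlam x hx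
  obtain ⟨b, hb⟩ := eig_of_posdef hPD
  refine ⟨b, fun i => ?_⟩
  obtain ⟨μ, hμ⟩ := hb i
  refine ⟨μ + lam, ?_⟩
  have hGA : Gm n * A = Gm n * (A - lam • Gm n) + lam • (1 : Matrix (Fin n) (Fin n) ℝ) := by
    rw [Matrix.mul_sub, Matrix.mul_smul, Gm_mul_Gm]
    abel
  rw [hGA, Matrix.add_mulVec, Matrix.smul_mulVec, Matrix.one_mulVec, hμ, add_smul]


lemma bf_Gm_single_single (i j : Fin n) (hij : i ≠ j) :
    bf (Gm n) (Pi.single i (1:ℝ)) (Pi.single j (1:ℝ)) = 0 := by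
  rw [bf, Gm, Matrix.diagonal_mulVec_single, single_dotProduct,
    Pi.single_eq_of_ne hij]
  ring

end MinkAux

open Matrix in
/-- Let `T` be a self-adjoint operator on Minkowski space `ℝⁿ` with
`n ≥ 3`, and suppose `⟪T x, x⟫ ≠ 0` for every nonzero null vector `x`.  Then `ℝⁿ`
admits a basis of eigenvectors of `T` (so `T` is diagonalizable with real spectrum). -/
theorem minkowski_diagonalizable_of_nonzero_on_null_cone
    (n : ℕ) (hn : 3 ≤ n) (T : (Fin n → ℝ) →ₗ[ℝ] (Fin n → ℝ))
    (hT : ∀ x y, mink n (T x) y = mink n x (T y))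
    (hnull : ∀ x : Fin n → ℝ, x ≠ 0 → mink n x x = 0 → mink n (T x) x ≠ 0) :
    ∃ b : Module.Basis (Fin n) ℝ (Fin n → ℝ), ∀ i, ∃ μ : ℝ, T (b i) = μ • b i := by
  classical
  have hn0 : 0 < n := by omega
  have hn1 : 1 < n := by omega
  set M := LinearMap.toMatrix' T with hMdef
  have hM : ∀ x, T x = M *ᵥ x := by
    intro x
    rw [hMdef, ← Matrix.toLin'_apply, Matrix.toLin'_toMatrix']
  have hbf : ∀ x y, MinkAux.bf (MinkAux.Gm n) (M *ᵥ x) y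
      = MinkAux.bf (MinkAux.Gm n) x (M *ᵥ y) := by
    intro x y
    have h := hT x y
    rw [MinkAux.mink_eq, MinkAux.mink_eq, hM x, hM y] at h
    exact h
  have hMG : Mᵀ * MinkAux.Gm n = MinkAux.Gm n * M := by
    ext i j
    have h := hbf (Pi.single i 1) (Pi.single j 1)
    rw [MinkAux.bf, MinkAux.bf, MinkAux.Gm] at h
    rw [Matrix.diagonal_mulVec_single] at h
    rw [dotProduct_single] at h
    rw [single_dotProduct] at h
    rw [Matrix.mulVec_diagonal] at h
    simp only [Matrix.mulVec_single, MulOpposite.op_one, one_smul, Matrix.col_apply, mul_one, one_mul] at h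
    rw [MinkAux.Gm, Matrix.mul_diagonal, Matrix.diagonal_mul, Matrix.transpose_apply]
    linarith
  set A := MinkAux.Gm n * M with hAdef
  have hAT : Aᵀ = A := by
    rw [hAdef, Matrix.transpose_mul, MinkAux.Gm_transpose, hMG]
  have hq : ∀ x, mink n (T x) x = MinkAux.qf A x := by
    intro x
    rw [MinkAux.mink_eq, hM, hbf x x]
    show (x ⬝ᵥ MinkAux.Gm n *ᵥ (M *ᵥ x)) = _
    rw [Matrix.mulVec_mulVec]
    rfl
  have hqmink : ∀ x : Fin n → ℝ, mink n x x = MinkAux.qf (MinkAux.Gm n) x := by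
    intro x
    rw [MinkAux.mink_eq]
    rfl
  have hnullA : ∀ z : Fin n → ℝ, z ≠ 0 → MinkAux.qf (MinkAux.Gm n) z = 0 →
      MinkAux.qf A z ≠ 0 := by
    intro z hz hzq
    rw [← hq]
    exact hnull z hz (by rw [hqmink]; exact hzq)
  -- anchor null vector
  set i0 : Fin n := ⟨0, hn0⟩ with hi0
  set i1 : Fin n := ⟨1, hn1⟩ with hi1
  have hi01 : i0 ≠ i1 := by
    rw [hi0, hi1]
    intro h
    rw [Fin.ext_iff] at h
    norm_num at h
  set xstar : Fin n → ℝ := Pi.single i0 1 + Pi.single i1 1 with hxstar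
  have hxne : xstar ≠ 0 := by
    intro h
    have := congrFun h i0
    rw [hxstar] at this
    simp only [Pi.add_apply, Pi.single_eq_same, Pi.single_eq_of_ne hi01, Pi.zero_apply] at this
    norm_num at this
  have hxq : MinkAux.qf (MinkAux.Gm n) xstar = 0 := by
    rw [hxstar, MinkAux.qf_add MinkAux.Gm_transpose,
      MinkAux.qf_Gm_single hn0, MinkAux.qf_Gm_single hn0,
      MinkAux.bf_Gm_single_single i0 i1 hi01]
    rw [hi0, hi1]
    norm_num
  have hfx0 := hnullA xstar hxne hxq
  rcases lt_trichotomy (MinkAux.qf A xstar) 0 with hneg | hzero | hpos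
  · -- negative case: use -A
    have hAT' : (-A)ᵀ = -A := by rw [Matrix.transpose_neg, hAT]
    have hnullA' : ∀ z : Fin n → ℝ, z ≠ 0 → MinkAux.qf (MinkAux.Gm n) z = 0 →
        MinkAux.qf (-A) z ≠ 0 := by
      intro z hz hzq
      rw [MinkAux.qf_neg]
      simpa using hnullA z hz hzq
    have hfx' : 0 < MinkAux.qf (-A) xstar := by
      rw [MinkAux.qf_neg]
      linarith
    have hpos' : ∀ z : Fin n → ℝ, z ≠ 0 → MinkAux.qf (MinkAux.Gm n) z = 0 →
        0 < MinkAux.qf (-A) z := by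
      intro z hz hzq
      exact MinkAux.sign_const hn hAT' hnullA' xstar z hxne hxq hz hzq hfx'
    obtain ⟨b, hb⟩ := MinkAux.main_pos hn hAT' hpos'
    refine ⟨b, fun i => ?_⟩
    obtain ⟨μ, hμ⟩ := hb i
    refine ⟨-μ, ?_⟩
    have hGmA : MinkAux.Gm n * (-A) = -M := by
      rw [Matrix.mul_neg, hAdef, ← Matrix.mul_assoc, MinkAux.Gm_mul_Gm, Matrix.one_mul]
    rw [hGmA, Matrix.neg_mulVec] at hμ
    have h2 : M *ᵥ b i = -(μ • b i) := by
      rw [← hμ, neg_neg]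
    rw [hM, h2, neg_smul]
  · exact absurd hzero hfx0
  · -- positive case
    have hpos' : ∀ z : Fin n → ℝ, z ≠ 0 → MinkAux.qf (MinkAux.Gm n) z = 0 →
        0 < MinkAux.qf A z := by
      intro z hz hzq
      exact MinkAux.sign_const hn hAT hnullA xstar z hxne hxq hz hzq hpos
    obtain ⟨b, hb⟩ := MinkAux.main_pos hn hAT hpos'
    refine ⟨b, fun i => ?_⟩
    obtain ⟨μ, hμ⟩ := hb i
    refine ⟨μ, ?_⟩
    have hGmA : MinkAux.Gm n * A = M := by
      rw [hAdef, ← Matrix.mul_assoc, MinkAux.Gm_mul_Gm, Matrix.one_mul]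
    rw [hGmA] at hμ
    rw [hM]
    exact hμ
end
end
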